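/- arXiv:2509.23026 — 6 statements merged into one kernel-verified Lean document; each statement's English description precedes it below -/
import Mathlib

section
/- Let G be a finite MOMG and let π* be a Pareto-Nash Equilibrium of G, where all policies are stationary stochastic policies. Then there exists a preference profile Λ = (λ^1,…,λ^N) with every λ^k ∈ Δ_M^o (all entries strictly positive and summing to 1) such that π* is a Nash equilibrium of the linearly scalarized game G_Λ. -/
open Finset

/-- A finite-horizon `N`-player multi-objective Markov game with `M` objectives,
horizon `H`, finite state space `S` and finite action sets `A j`. -/
structure MOMG (N M H : ℕ) (S : Type) (A : Fin N → Type) [Fintype S]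
    [∀ j, Fintype (A j)] where
  /-- transition kernels `P_h : S × A → Δ(S)` -/
  P : Fin H → S → ((j : Fin N) → A j) → S → ℝ
  P_nonneg : ∀ h s a s', 0 ≤ P h s a s'
  P_sum_one : ∀ h s a, ∑ s', P h s a s' = 1
  /-- vector rewards `r_{j,h} : S × A → [0,1]^M` -/
  r : Fin N → Fin H → S → ((j : Fin N) → A j) → Fin M → ℝ
  r_nonneg : ∀ j h s a i, 0 ≤ r j h s a i
  r_le_one : ∀ j h s a i, r j h s a i ≤ 1

variable {N M H : ℕ} {S : Type} {A : Fin N → Type} [Fintype S] [∀ j, Fintype (A j)]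

/-- A Markov stochastic policy: a decision rule `S → Δ(α)` for each step. -/
def IsPolicy {H : ℕ} {S α : Type} [Fintype α] (ρ : Fin H → S → α → ℝ) : Prop :=
  ∀ h s, (∀ a, 0 ≤ ρ h s a) ∧ ∑ a, ρ h s a = 1

/-- A product policy: each agent plays a Markov stochastic policy. -/
def IsProductPolicy (π : (j : Fin N) → Fin H → S → A j → ℝ) : Prop :=
  ∀ j, IsPolicy (π j)

/-- Value vector of agent `k` under the product policy `π`, computed by backward
recursion on the number `t` of remaining steps; step index is `H - t`. -/
noncomputable def Vvec (G : MOMG N M H S A) (k : Fin N)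
    (π : (j : Fin N) → Fin H → S → A j → ℝ) : ℕ → S → Fin M → ℝ
  | 0, _, _ => 0
  | (t+1), s, i =>
    if ht : H - (t+1) < H then
      ∑ a : (j : Fin N) → A j, (∏ j, π j ⟨H - (t+1), ht⟩ s (a j)) *
        (G.r k ⟨H - (t+1), ht⟩ s a i +
          ∑ s', G.P ⟨H - (t+1), ht⟩ s a s' * Vvec G k π t s' i)
    else 0

/-- `V_{k,1}^π(s_1) ∈ ℝ^M`. -/
noncomputable def ValueVec (G : MOMG N M H S A) (k : Fin N)
    (π : (j : Fin N) → Fin H → S → A j → ℝ) (s1 : S) : Fin M → ℝ :=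
  fun i => Vvec G k π H s1 i

/-- `u` Pareto dominates `v`. -/
def ParetoDom {M : ℕ} (u v : Fin M → ℝ) : Prop :=
  (∀ i, v i ≤ u i) ∧ ∃ i, v i < u i

/-- `u` strictly Pareto dominates `v`. -/
def StrictParetoDom {M : ℕ} (u v : Fin M → ℝ) : Prop :=
  ∀ i, v i < u i

/-- the closed probability simplex Δ_M -/
def InSimplex {M : ℕ} (l : Fin M → ℝ) : Prop :=
  (∀ i, 0 ≤ l i) ∧ ∑ i, l i = 1

/-- the relative interior Δ_M^o of the simplex -/
def InOpenSimplex {M : ℕ} (l : Fin M → ℝ) : Prop :=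
  (∀ i, 0 < l i) ∧ ∑ i, l i = 1

/-- Pareto-Nash Equilibrium: no agent has a unilateral (Markov stochastic)
deviation whose value vector Pareto dominates its value under `π`. -/
def IsPNE (G : MOMG N M H S A) (s1 : S)
    (π : (j : Fin N) → Fin H → S → A j → ℝ) : Prop :=
  ∀ k, ∀ ρ : Fin H → S → A k → ℝ, IsPolicy ρ →
    ¬ ParetoDom (ValueVec G k (Function.update π k ρ) s1) (ValueVec G k π s1)

/-- Weak Pareto-Nash Equilibrium: no unilateral deviation strictly Pareto
dominates. -/
def IsWPNE (G : MOMG N M H S A) (s1 : S)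
    (π : (j : Fin N) → Fin H → S → A j → ℝ) : Prop :=
  ∀ k, ∀ ρ : Fin H → S → A k → ℝ, IsPolicy ρ →
    ¬ StrictParetoDom (ValueVec G k (Function.update π k ρ) s1) (ValueVec G k π s1)

/-- Nash equilibrium of the linearly scalarized game `G_Λ`. -/
def IsScalarizedNE (G : MOMG N M H S A) (s1 : S) (lam : Fin N → Fin M → ℝ)
    (π : (j : Fin N) → Fin H → S → A j → ℝ) : Prop :=
  ∀ k, ∀ ρ : Fin H → S → A k → ℝ, IsPolicy ρ →
    ∑ i, lam k i * ValueVec G k (Function.update π k ρ) s1 i ≤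
      ∑ i, lam k i * ValueVec G k π s1 i

/-!
Fix an agent `k` and the policies of the others. The value vectors `k` can reach with Markov
policies form the convex hull of the finitely many values of deterministic policies: the value
of a stochastic policy is an average of deterministic values (draw the decision at every
(step, state) pair independently), and conversely two policies can be mixed so that the
occupancy measure, hence the value, is any convex combination of theirs. No point of this
polytope Pareto dominates the equilibrium value `V*`. For a polytope, unlike a general convex
set, this gives a strictly positive `λ` with `λ ⬝ᵥ v ≤ λ ⬝ᵥ V*` on it: apply a Stiemke-type
alternative, proved from Farkas' lemma, to the vertices minus `V*`.
-/

section ConicSeparation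

variable {K E ι : Type*} [Field K] [LinearOrder K] [IsStrictOrderedRing K]
  [AddCommGroup E] [Module K E]

/-- Farkas' lemma. -/
theorem exists_dual_pos_of_forall_sum_smul_ne (v : ι → E) (b : E) (s : Finset ι)
    (hb : ∀ μ : ι → K, (∀ i ∈ s, 0 ≤ μ i) → ∑ i ∈ s, μ i • v i ≠ b) :
    ∃ f : Module.Dual K E, (∀ i ∈ s, f (v i) ≤ 0) ∧ 0 < f b := by
  classical
  induction s using Finset.induction_on generalizing v b with
  | empty =>
    obtain ⟨f, hf⟩ : ∃ f : Module.Dual K E, f b ≠ 0 := by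
      by_contra! h
      exact hb 0 (by simp) (by simpa using ((Module.forall_dual_apply_eq_zero_iff K b).1 h).symm)
    exact ⟨(f b)⁻¹ • f, by simp, by simp [hf]⟩
  | insert j s hj IH =>
    have extend : ∀ (μ : ι → K) (c : K), (∀ i ∈ s, 0 ≤ μ i) → 0 ≤ c →
        ∑ i ∈ s, μ i • v i + c • v j ≠ b := by
      intro μ c hμ hc
      have hupd : ∀ i ∈ s, Function.update μ j c i = μ i := fun i hi =>
        Function.update_of_ne (ne_of_mem_of_not_mem hi hj) _ _
      convert hb (Function.update μ j c) (forall_mem_insert _ _ _ |>.2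
        ⟨by simpa using hc, fun i hi => hupd i hi ▸ hμ i hi⟩) using 1
      rw [sum_insert hj, Function.update_self, add_comm (c • v j)]
      exact congrArg (· + c • v j) (sum_congr rfl fun i hi => by rw [hupd i hi])
    obtain ⟨f, hfs, hfb⟩ := IH v b fun μ hμ hsum => extend μ 0 hμ le_rfl (by simpa using hsum)
    by_cases hfj : f (v j) ≤ 0
    · exact ⟨f, forall_mem_insert _ _ _ |>.2 ⟨hfj, hfs⟩, hfb⟩
    push Not at hfj
    -- `p` projects along `v j` onto `ker f`; a conic representation of `p b` lifts to one of `b`.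
    set p : E →ₗ[K] E := f (v j) • LinearMap.id - f.smulRight (v j) with hp
    obtain ⟨g, hgs, hgb⟩ := IH (p ∘ v) (p b) fun μ hμ hsum => by
      set y := b - ∑ i ∈ s, μ i • v i
      have hpy : f (v j) • y = f y • v j := by
        have : p y = 0 := by
          simp only [y, map_sub, map_sum, map_smul, sub_eq_zero, ← hsum, Function.comp_apply]
        simpa [hp, sub_eq_zero] using this
      have hfy : 0 ≤ f y := by
        have := sum_nonpos fun i hi => mul_nonpos_of_nonneg_of_nonpos (hμ i hi) (hfs i hi)
        simp only [y, map_sub, map_sum, map_smul, smul_eq_mul]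
        linarith
      refine extend μ (f y / f (v j)) hμ (div_nonneg hfy hfj.le) ?_
      rw [div_eq_inv_mul, mul_smul, ← hpy, smul_smul, inv_mul_cancel₀ hfj.ne', one_smul]
      simp [y]
    refine ⟨g ∘ₗ p, forall_mem_insert _ _ _ |>.2 ⟨?_, hgs⟩, hgb⟩
    simp [hp]

/-- A Stiemke-type theorem of the alternative. -/
theorem exists_pos_dotProduct_nonpos {κ : Type*} [Fintype κ] [DecidableEq κ] [Fintype ι]
    (v : ι → κ → K)
    (hv : ∀ μ : ι → K, (∀ i, 0 ≤ μ i) → 0 ≤ ∑ i, μ i • v i → ∑ i, μ i • v i = 0) :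
    ∃ w : κ → K, (∀ m, 0 < w m) ∧ ∀ i, w ⬝ᵥ v i ≤ 0 := by
  -- separate each unit vector from the cone spanned by the `v i` and the `-eₘ`
  have separate : ∀ m, ∃ f : Module.Dual K (κ → K), (∀ i, f (v i) ≤ 0) ∧
      (∀ m', 0 ≤ f (Pi.single m' 1)) ∧ 0 < f (Pi.single m 1) := by
    intro m
    obtain ⟨f, hf, hfm⟩ := exists_dual_pos_of_forall_sum_smul_ne (K := K)
      (Sum.elim v fun m' => -(Pi.single m' 1 : κ → K)) (Pi.single m 1) univ fun μ hμ hsum => by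
        have hcone : ∑ i, μ (.inl i) • v i =
            Pi.single m 1 + ∑ m', μ (.inr m') • (Pi.single m' 1 : κ → K) := by
          rw [← hsum, Fintype.sum_sum_type]
          simp
        have hpos : 0 ≤ ∑ i, μ (.inl i) • v i := by
          rw [hcone]
          exact add_nonneg (by simp [Pi.single_nonneg])
            (sum_nonneg fun m' _ => smul_nonneg (hμ _ (mem_univ _)) (by simp [Pi.single_nonneg]))
        have := congr_fun (hcone.symm.trans (hv _ (fun i => hμ _ (mem_univ _)) hpos)) m
        simp only [Pi.add_apply, Pi.single_eq_same, Finset.sum_apply, Pi.smul_apply,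
          Pi.single_apply, smul_eq_mul, mul_ite, mul_one, mul_zero, sum_ite_eq, mem_univ,
          ↓reduceIte, Pi.zero_apply] at this
        linarith [hμ (.inr m) (mem_univ _)]
    exact ⟨f, fun i => hf (.inl i) (mem_univ _), fun m' => by simpa using hf (.inr m') (mem_univ _),
      hfm⟩
  choose f hfv hfe hfm using separate
  refine ⟨(dotProductEquiv K κ).symm (∑ m, f m), fun m => ?_, fun i => ?_⟩
  · simp only [dotProductEquiv_symm_apply, LinearMap.coe_sum, Finset.sum_apply]
    exact (hfm m).trans_le (single_le_sum (fun m₀ _ => hfe m₀ m) (mem_univ m))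
  · rw [← dotProductEquiv_apply_apply, LinearEquiv.apply_symm_apply, LinearMap.coe_sum,
      Finset.sum_apply]
    exact sum_nonpos fun m _ => hfv m i

end ConicSeparation

theorem exists_openSimplex_weights_of_not_paretoDom {ι : Type*} [Fintype ι] (hM : 0 < M)
    (p : ι → Fin M → ℝ) (x : Fin M → ℝ)
    (hx : ∀ y ∈ convexHull ℝ (Set.range p), ¬ ParetoDom y x) :
    ∃ w, InOpenSimplex w ∧ ∀ y ∈ convexHull ℝ (Set.range p), w ⬝ᵥ y ≤ w ⬝ᵥ x := by
  obtain ⟨w, hw, hwp⟩ := exists_pos_dotProduct_nonpos (fun i => p i - x) fun μ hμ hz => by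
    by_contra hne
    obtain ⟨m, hm⟩ := Function.ne_iff.1 hne
    have hT : 0 < ∑ i, μ i := by
      refine (sum_nonneg fun i _ => hμ i).lt_of_ne fun hT => hne ?_
      have hμ0 := (sum_eq_zero_iff_of_nonneg fun i _ => hμ i).1 hT.symm
      exact sum_eq_zero fun i hi => by rw [hμ0 i hi, zero_smul]
    have hz' : ∀ m', 0 ≤ ∑ i, μ i * (p i m' - x m') := fun m' => by
      simpa [Finset.sum_apply] using hz m'
    have hm' : ∑ i, μ i * (p i m - x m) ≠ 0 := by simpa [Finset.sum_apply] using hm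
    -- the barycentre of the `p i` with weights `μ` would Pareto dominate `x`
    have hy : ∀ m', univ.centerMass μ p m' - x m' =
        (∑ i, μ i)⁻¹ * ∑ i, μ i * (p i m' - x m') := by
      intro m'
      simp only [centerMass, Pi.smul_apply, Finset.sum_apply, smul_eq_mul, mul_sub,
        sum_sub_distrib, ← sum_mul]
      field_simp
    refine hx _ (univ.centerMass_mem_convexHull (fun i _ => hμ i) hT fun i _ => ⟨i, rfl⟩)
      ⟨fun m' => ?_, m, ?_⟩
    · linarith [hy m', mul_nonneg (inv_nonneg.2 hT.le) (hz' m')]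
    · linarith [hy m, mul_pos (inv_pos.2 hT) ((hz' m).lt_of_ne' hm')]
  have hW : 0 < ∑ m, w m := sum_pos (fun m _ => hw m) ⟨⟨0, hM⟩, mem_univ _⟩
  set w' := (∑ m, w m)⁻¹ • w
  have hconv : Convex ℝ {y | w' ⬝ᵥ y ≤ w' ⬝ᵥ x} :=
    convex_halfSpace_le ⟨fun _ _ => dotProduct_add _ _ _, fun _ _ => dotProduct_smul _ _ _⟩ _
  refine ⟨w', ⟨fun m => by simp [w', hw m, hW], by simp [w', ← mul_sum, hW.ne']⟩,
    fun y hy => convexHull_min ?_ hconv hy⟩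
  rintro _ ⟨i, rfl⟩
  have := hwp i
  simp only [Set.mem_ofPred_eq, w', smul_dotProduct, smul_eq_mul, dotProduct_sub] at this ⊢
  exact mul_le_mul_of_nonneg_left (by linarith) (inv_nonneg.2 hW.le)

theorem sum_mul_sum_prod_mul_eq_of_forall_update {ι R : Type*} [Fintype ι] [DecidableEq ι]
    [CommSemiring R] {κ : ι → Type*} [∀ i, Fintype (κ i)] (p : ∀ i, κ i → R) (i : ι)
    (Φ : κ i → (∀ j, κ j) → R) (hΦ : ∀ x d y, Φ x (Function.update d i y) = Φ x d) :
    ∑ x, p i x * ∑ d, (∏ j, p j (d j)) * Φ x d =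
      (∑ x, p i x) * ∑ d, (∏ j, p j (d j)) * Φ (d i) d := by
  have hprod : ∀ d x,
      ∏ j, p j (Function.update d i x j) = p i x * ∏ j ∈ univ \ {i}, p j (d j) := fun d x => by
    simp only [Function.apply_update (fun j => p j)]
    exact prod_update_of_mem (mem_univ i) _ _
  have hprod' : ∀ d : ∀ j, κ j, ∏ j, p j (d j) = p i (d i) * ∏ j ∈ univ \ {i}, p j (d j) :=
    fun d => by rw [← hprod, Function.update_eq_self]
  have hτ : Function.Involutive fun xd : κ i × (∀ j, κ j) =>
      (xd.2 i, Function.update xd.2 i xd.1) := by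
    rintro ⟨x, d⟩
    simp
  calc ∑ x, p i x * ∑ d, (∏ j, p j (d j)) * Φ x d
      = ∑ xd : κ i × (∀ j, κ j), p i xd.1 * ((∏ j, p j (xd.2 j)) * Φ xd.1 xd.2) := by
        simp only [Fintype.sum_prod_type, mul_sum]
    _ = ∑ xd : κ i × (∀ j, κ j), p i (xd.2 i) * ((∏ j, p j (Function.update xd.2 i xd.1 j)) *
          Φ (xd.2 i) (Function.update xd.2 i xd.1)) :=
        (Equiv.sum_comp hτ.toPerm _).symm
    _ = ∑ x, p i x * ∑ d, (∏ j, p j (d j)) * Φ (d i) d := by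
        simp only [Fintype.sum_prod_type, hprod, hprod', hΦ, mul_sum]
        exact sum_congr rfl fun _ _ => sum_congr rfl fun _ _ => by ring
    _ = _ := by rw [sum_mul]

theorem Vvec_succ_of_add_eq (G : MOMG N M H S A) (k : Fin N) (π : ∀ j, Fin H → S → A j → ℝ)
    {t : ℕ} (h : Fin H) (hh : (h : ℕ) + (t + 1) = H) (s : S) (i : Fin M) :
    Vvec G k π (t + 1) s i = ∑ a : ∀ j, A j, (∏ j, π j h s (a j)) *
      (G.r k h s a i + ∑ s', G.P h s a s' * Vvec G k π t s' i) := by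
  obtain ⟨h, hlt⟩ := h
  obtain rfl : h = H - (t + 1) := by simp only at hh; omega
  rw [Vvec, dif_pos hlt]

theorem Vvec_congr (G : MOMG N M H S A) (k : Fin N) {π π' : ∀ j, Fin H → S → A j → ℝ} (t : ℕ)
    (hπ : ∀ j (h : Fin H), H ≤ h + t → π j h = π' j h) : Vvec G k π t = Vvec G k π' t := by
  induction t with
  | zero => rfl
  | succ t IH =>
    funext s i
    simp only [Vvec]
    rw [IH fun j h hh => hπ j h (by omega)]
    split_ifs with ht
    · simp only [hπ _ ⟨H - (t + 1), ht⟩ (by simp only; omega)]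
    · rfl

theorem prod_update_apply {N H : ℕ} {S : Type} {A : Fin N → Type} (σ : ∀ j, Fin H → S → A j → ℝ)
    (k : Fin N) (ρ : Fin H → S → A k → ℝ) (h : Fin H) (s : S) (a : ∀ j, A j) :
    ∏ j, Function.update σ k ρ j h s (a j) = ρ h s (a k) * ∏ j ∈ univ \ {k}, σ j h s (a j) := by
  simp only [Function.apply_update (fun j (π : Fin H → S → A j → ℝ) => π h s (a j))]
  exact prod_update_of_mem (mem_univ k) _ _

theorem Vvec_update_succ (G : MOMG N M H S A) (σ : ∀ j, Fin H → S → A j → ℝ) (k : Fin N)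
    (ρ : Fin H → S → A k → ℝ) {t : ℕ} (h : Fin H) (hh : (h : ℕ) + (t + 1) = H) (s : S)
    (i : Fin M) :
    Vvec G k (Function.update σ k ρ) (t + 1) s i = ∑ a : ∀ j, A j, ρ h s (a k) *
      ((∏ j ∈ univ \ {k}, σ j h s (a j)) *
        (G.r k h s a i + ∑ s', G.P h s a s' * Vvec G k (Function.update σ k ρ) t s' i)) := by
  simp only [Vvec_succ_of_add_eq G k _ h hh, prod_update_apply, mul_assoc]

def detPolicy {H : ℕ} {S α : Type} [DecidableEq α] (d : Fin H × S → α) : Fin H → S → α → ℝ :=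
  fun h s a => if a = d (h, s) then 1 else 0

theorem isPolicy_detPolicy {H : ℕ} {S α : Type} [Fintype α] [DecidableEq α] (d : Fin H × S → α) :
    IsPolicy (detPolicy d) :=
  fun h s => ⟨fun a => by unfold detPolicy; split_ifs <;> norm_num, by simp [detPolicy]⟩

/-- The probability of the decision rule `d` when `ρ` is sampled independently at every
(step, state) pair. -/
def decisionWeight {H : ℕ} {S α : Type} [Fintype S] (ρ : Fin H → S → α → ℝ)
    (d : Fin H × S → α) : ℝ :=
  ∏ b : Fin H × S, ρ b.1 b.2 (d b)

theorem decisionWeight_nonneg {H : ℕ} {S α : Type} [Fintype S] [Fintype α]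
    {ρ : Fin H → S → α → ℝ} (hρ : IsPolicy ρ) (d : Fin H × S → α) : 0 ≤ decisionWeight ρ d :=
  prod_nonneg fun b _ => (hρ b.1 b.2).1 _

theorem sum_decisionWeight {H : ℕ} {S α : Type} [Fintype S] [DecidableEq S] [Fintype α]
    {ρ : Fin H → S → α → ℝ} (hρ : IsPolicy ρ) : ∑ d, decisionWeight ρ d = 1 := by
  simp only [decisionWeight, ← Fintype.prod_sum]
  exact prod_eq_one fun b _ => (hρ b.1 b.2).2

theorem Vvec_update_detPolicy_update [DecidableEq S] (G : MOMG N M H S A)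
    (σ : ∀ j, Fin H → S → A j → ℝ) (k : Fin N) [DecidableEq (A k)] (d : Fin H × S → A k)
    (b : Fin H × S) (y : A k) {t : ℕ} (hb : (b.1 : ℕ) + t < H) :
    Vvec G k (Function.update σ k (detPolicy (Function.update d b y))) t =
      Vvec G k (Function.update σ k (detPolicy d)) t := by
  refine Vvec_congr G k t fun j h hh => ?_
  rcases eq_or_ne j k with rfl | hj
  · have hne : ∀ s, (h, s) ≠ b := fun s e => by
      have := congrArg (fun b : Fin H × S => (b.1 : ℕ)) e
      simp only at this
      omega
    funext s a
    simp [detPolicy, Function.update_of_ne (hne s)]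
  · simp [Function.update_of_ne hj]

/-- Kuhn's theorem for Markov policies. -/
theorem Vvec_update_eq_sum_decisionWeight [DecidableEq S] (G : MOMG N M H S A)
    (σ : ∀ j, Fin H → S → A j → ℝ) (k : Fin N) [DecidableEq (A k)] {ρ : Fin H → S → A k → ℝ}
    (hρ : IsPolicy ρ) : ∀ t ≤ H, ∀ s i, Vvec G k (Function.update σ k ρ) t s i =
      ∑ d, decisionWeight ρ d * Vvec G k (Function.update σ k (detPolicy d)) t s i
  | 0, _, s, i => by simp [Vvec]
  | t + 1, ht, s, i => by
    set h : Fin H := ⟨H - (t + 1), by omega⟩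
    have hh : (h : ℕ) + (t + 1) = H := by simp only [h]; omega
    set W := fun d s' => Vvec G k (Function.update σ k (detPolicy d)) t s' i
    set Y := fun d a => (∏ j ∈ univ \ {k}, σ j h s (a j)) *
      (G.r k h s a i + ∑ s', G.P h s a s' * W d s')
    have hL : Vvec G k (Function.update σ k ρ) (t + 1) s i =
        ∑ d, decisionWeight ρ d * ∑ a, ρ h s (a k) * Y d a := by
      rw [Vvec_update_succ G σ k ρ h hh]
      simp only [Vvec_update_eq_sum_decisionWeight G σ k hρ t (by omega), mul_sum]
      rw [sum_comm]
      refine sum_congr rfl fun a _ => ?_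
      simp only [Y, mul_add, sum_add_distrib, mul_sum]
      congr 1
      · rw [← sum_mul, sum_decisionWeight hρ, one_mul]
      · rw [sum_comm]
        exact sum_congr rfl fun _ _ => sum_congr rfl fun _ _ => by simp only [W]; ring
    have hR : ∀ d, Vvec G k (Function.update σ k (detPolicy d)) (t + 1) s i =
        ∑ a, detPolicy d h s (a k) * Y d a := fun d => Vvec_update_succ G σ k _ h hh s i
    -- `Y d` does not see the decision at `(h, s)`, so that decision can be averaged out first
    have key := sum_mul_sum_prod_mul_eq_of_forall_update (fun b : Fin H × S => ρ b.1 b.2) (h, s)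
      (fun β d => ∑ a, (if a k = β then 1 else 0) * Y d a) fun β d y => by
        have hb : (h : ℕ) + t < H := by omega
        simp only [Y, W, Vvec_update_detPolicy_update G σ k d (h, s) y hb]
    rw [(hρ h s).2, one_mul] at key
    rw [hL]
    simp only [hR]
    refine Eq.trans ?_ key
    simp only [mul_sum]
    conv_rhs => rw [sum_comm]
    refine sum_congr rfl fun d _ => ?_
    conv_rhs => rw [sum_comm]
    refine sum_congr rfl fun a _ => ?_
    simp only [decisionWeight, ite_mul, one_mul, zero_mul, mul_ite, mul_zero, sum_ite_eq, mem_univ,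
      ↓reduceIte]
    ring

theorem ValueVec_update_mem_convexHull (G : MOMG N M H S A) (s1 : S)
    (σ : ∀ j, Fin H → S → A j → ℝ) (k : Fin N) [DecidableEq (A k)] {ρ : Fin H → S → A k → ℝ}
    (hρ : IsPolicy ρ) :
    ValueVec G k (Function.update σ k ρ) s1 ∈ convexHull ℝ (Set.range fun d : Fin H × S → A k =>
      ValueVec G k (Function.update σ k (detPolicy d)) s1) := by
  classical
  have hexp : ValueVec G k (Function.update σ k ρ) s1 =
      ∑ d, decisionWeight ρ d • ValueVec G k (Function.update σ k (detPolicy d)) s1 := by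
    funext i
    simp [ValueVec, Finset.sum_apply, Vvec_update_eq_sum_decisionWeight G σ k hρ H le_rfl]
  rw [hexp]
  exact (convex_convexHull ℝ _).sum_mem (fun d _ => decisionWeight_nonneg hρ d)
    (sum_decisionWeight hρ) fun d _ => subset_convexHull ℝ _ ⟨d, rfl⟩

noncomputable def mixPolicy {H : ℕ} {S α : Type} (w₁ w₂ : Fin H → S → ℝ)
    (ρ₁ ρ₂ : Fin H → S → α → ℝ) : Fin H → S → α → ℝ := fun h s x =>
  if w₁ h s + w₂ h s = 0 then ρ₁ h s x
  else (w₁ h s * ρ₁ h s x + w₂ h s * ρ₂ h s x) / (w₁ h s + w₂ h s)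

section MixPolicy

variable {H : ℕ} {S α : Type} {w₁ w₂ : Fin H → S → ℝ} {ρ₁ ρ₂ : Fin H → S → α → ℝ}

theorem isPolicy_mixPolicy [Fintype α] (hw₁ : 0 ≤ w₁) (hw₂ : 0 ≤ w₂) (hρ₁ : IsPolicy ρ₁)
    (hρ₂ : IsPolicy ρ₂) : IsPolicy (mixPolicy w₁ w₂ ρ₁ ρ₂) := by
  intro h s
  have h₁ : 0 ≤ w₁ h s := hw₁ h s
  have h₂ : 0 ≤ w₂ h s := hw₂ h s
  by_cases hw : w₁ h s + w₂ h s = 0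
  · simpa [mixPolicy, hw] using hρ₁ h s
  refine ⟨fun x => ?_, ?_⟩
  · simp only [mixPolicy, hw, if_false]
    have := (hρ₁ h s).1 x
    have := (hρ₂ h s).1 x
    positivity
  · simp only [mixPolicy, hw, if_false, ← sum_div, sum_add_distrib, ← mul_sum, (hρ₁ h s).2,
      (hρ₂ h s).2, mul_one, div_self hw]

theorem add_mul_mixPolicy (hw₁ : 0 ≤ w₁) (hw₂ : 0 ≤ w₂) (h : Fin H) (s : S) (x : α) :
    (w₁ h s + w₂ h s) * mixPolicy w₁ w₂ ρ₁ ρ₂ h s x = w₁ h s * ρ₁ h s x + w₂ h s * ρ₂ h s x := by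
  by_cases hw : w₁ h s + w₂ h s = 0
  · have h₁ : 0 ≤ w₁ h s := hw₁ h s
    have h₂ : 0 ≤ w₂ h s := hw₂ h s
    obtain ⟨e₁, e₂⟩ : w₁ h s = 0 ∧ w₂ h s = 0 := ⟨by linarith, by linarith⟩
    simp [e₁, e₂]
  · simp only [mixPolicy, hw, if_false]
    field_simp

end MixPolicy

theorem sum_add_mul_sum_prod_update_mixPolicy (σ : ∀ j, Fin H → S → A j → ℝ) (k : Fin N)
    {w₁ w₂ : Fin H → S → ℝ} {ρ₁ ρ₂ : Fin H → S → A k → ℝ} (hw₁ : 0 ≤ w₁) (hw₂ : 0 ≤ w₂)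
    (h : Fin H) (F : S → (∀ j, A j) → ℝ) :
    ∑ s, (w₁ h s + w₂ h s) *
        ∑ a, (∏ j, Function.update σ k (mixPolicy w₁ w₂ ρ₁ ρ₂) j h s (a j)) * F s a =
      ∑ s, w₁ h s * ∑ a, (∏ j, Function.update σ k ρ₁ j h s (a j)) * F s a +
        ∑ s, w₂ h s * ∑ a, (∏ j, Function.update σ k ρ₂ j h s (a j)) * F s a := by
  rw [← sum_add_distrib]
  refine sum_congr rfl fun s _ => ?_
  simp only [prod_update_apply, mul_sum, ← sum_add_distrib]
  refine sum_congr rfl fun a _ => ?_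
  linear_combination (∏ j ∈ univ \ {k}, σ j h s (a j)) * F s a *
    add_mul_mixPolicy (ρ₁ := ρ₁) (ρ₂ := ρ₂) hw₁ hw₂ h s (a k)

noncomputable def stateDist [DecidableEq S] (G : MOMG N M H S A)
    (π : ∀ j, Fin H → S → A j → ℝ) (s1 : S) : ℕ → S → ℝ
  | 0, s => if s = s1 then 1 else 0
  | u + 1, s' => if hu : u < H then
      ∑ s, stateDist G π s1 u s * ∑ a : ∀ j, A j, (∏ j, π j ⟨u, hu⟩ s (a j)) * G.P ⟨u, hu⟩ s a s'
    else 0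

section StateDist

variable [DecidableEq S] (G : MOMG N M H S A) (s1 : S)

theorem stateDist_succ (π : ∀ j, Fin H → S → A j → ℝ) {u : ℕ} (hu : u < H) (s' : S) :
    stateDist G π s1 (u + 1) s' = ∑ s, stateDist G π s1 u s *
      ∑ a : ∀ j, A j, (∏ j, π j ⟨u, hu⟩ s (a j)) * G.P ⟨u, hu⟩ s a s' := by
  rw [stateDist, dif_pos hu]

theorem stateDist_nonneg {π : ∀ j, Fin H → S → A j → ℝ} (hπ : IsProductPolicy π) :
    ∀ u s, 0 ≤ stateDist G π s1 u s
  | 0, s => by unfold stateDist; split_ifs <;> norm_num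
  | u + 1, s' => by
    unfold stateDist
    split_ifs
    · exact sum_nonneg fun s _ => mul_nonneg (stateDist_nonneg hπ u s) (sum_nonneg fun a _ =>
        mul_nonneg (prod_nonneg fun j _ => (hπ j _ _).1 _) (G.P_nonneg _ _ _ _))
    · exact le_rfl

theorem sum_stateDist_mul_Vvec_succ (k : Fin N) (π : ∀ j, Fin H → S → A j → ℝ) {t : ℕ}
    (h : Fin H) (hh : (h : ℕ) + (t + 1) = H) (i : Fin M) :
    ∑ s, stateDist G π s1 h s * Vvec G k π (t + 1) s i =
      ∑ s, stateDist G π s1 h s * ∑ a, (∏ j, π j h s (a j)) * G.r k h s a i +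
        ∑ s', stateDist G π s1 (h + 1) s' * Vvec G k π t s' i := by
  simp only [Vvec_succ_of_add_eq G k π h hh, stateDist_succ G s1 π h.isLt, Fin.eta, mul_add,
    sum_add_distrib, mul_sum, sum_mul]
  congr 1
  conv_lhs => enter [2, s]; rw [sum_comm]
  rw [sum_comm]
  exact sum_congr rfl fun _ _ => sum_congr rfl fun _ _ => sum_congr rfl fun _ _ => by ring

end StateDist

theorem IsProductPolicy.update {N H : ℕ} {S : Type} {A : Fin N → Type} [∀ j, Fintype (A j)]
    {σ : ∀ j, Fin H → S → A j → ℝ} (hσ : IsProductPolicy σ) {k : Fin N}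
    {ρ : Fin H → S → A k → ℝ} (hρ : IsPolicy ρ) : IsProductPolicy (Function.update σ k ρ) := by
  intro j
  rcases eq_or_ne j k with rfl | hj
  · simpa using hρ
  · simpa [Function.update_of_ne hj] using hσ j

/-- The policy whose state-action occupancy measure is `c₁` times that of `ρ₁` plus `c₂` times
that of `ρ₂` (against the opponents' policies in `σ`). -/
noncomputable def occupancyMix [DecidableEq S] (G : MOMG N M H S A) (s1 : S)
    (σ : ∀ j, Fin H → S → A j → ℝ) (k : Fin N) (c₁ c₂ : ℝ) (ρ₁ ρ₂ : Fin H → S → A k → ℝ) :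
    Fin H → S → A k → ℝ :=
  mixPolicy (fun h s => c₁ * stateDist G (Function.update σ k ρ₁) s1 h s)
    (fun h s => c₂ * stateDist G (Function.update σ k ρ₂) s1 h s) ρ₁ ρ₂

section OccupancyMix

variable [DecidableEq S] (G : MOMG N M H S A) (s1 : S) {σ : ∀ j, Fin H → S → A j → ℝ}
  (k : Fin N) {ρ₁ ρ₂ : Fin H → S → A k → ℝ} {c₁ c₂ : ℝ}

theorem isPolicy_occupancyMix (hσ : IsProductPolicy σ) (hρ₁ : IsPolicy ρ₁) (hρ₂ : IsPolicy ρ₂)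
    (hc₁ : 0 ≤ c₁) (hc₂ : 0 ≤ c₂) : IsPolicy (occupancyMix G s1 σ k c₁ c₂ ρ₁ ρ₂) :=
  isPolicy_mixPolicy (fun h s => mul_nonneg hc₁ (stateDist_nonneg G s1 (hσ.update hρ₁) h s))
    (fun h s => mul_nonneg hc₂ (stateDist_nonneg G s1 (hσ.update hρ₂) h s)) hρ₁ hρ₂

theorem sum_mul_sum_prod_update_occupancyMix (hσ : IsProductPolicy σ) (hρ₁ : IsPolicy ρ₁)
    (hρ₂ : IsPolicy ρ₂) (hc₁ : 0 ≤ c₁) (hc₂ : 0 ≤ c₂) (h : Fin H) (F : S → (∀ j, A j) → ℝ) :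
    ∑ s, (c₁ * stateDist G (Function.update σ k ρ₁) s1 h s +
        c₂ * stateDist G (Function.update σ k ρ₂) s1 h s) *
      ∑ a, (∏ j, Function.update σ k (occupancyMix G s1 σ k c₁ c₂ ρ₁ ρ₂) j h s (a j)) * F s a =
    c₁ * ∑ s, stateDist G (Function.update σ k ρ₁) s1 h s *
        ∑ a, (∏ j, Function.update σ k ρ₁ j h s (a j)) * F s a +
      c₂ * ∑ s, stateDist G (Function.update σ k ρ₂) s1 h s *
        ∑ a, (∏ j, Function.update σ k ρ₂ j h s (a j)) * F s a := by
  rw [occupancyMix, sum_add_mul_sum_prod_update_mixPolicy σ k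
    (fun h s => mul_nonneg hc₁ (stateDist_nonneg G s1 (hσ.update hρ₁) h s))
    (fun h s => mul_nonneg hc₂ (stateDist_nonneg G s1 (hσ.update hρ₂) h s)) h F]
  simp only [mul_sum, mul_assoc]

theorem stateDist_update_occupancyMix (hσ : IsProductPolicy σ) (hρ₁ : IsPolicy ρ₁)
    (hρ₂ : IsPolicy ρ₂) (hc₁ : 0 ≤ c₁) (hc₂ : 0 ≤ c₂) (hc : c₁ + c₂ = 1) : ∀ u s,
    stateDist G (Function.update σ k (occupancyMix G s1 σ k c₁ c₂ ρ₁ ρ₂)) s1 u s =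
      c₁ * stateDist G (Function.update σ k ρ₁) s1 u s +
        c₂ * stateDist G (Function.update σ k ρ₂) s1 u s
  | 0, s => by
    simp only [stateDist]
    split_ifs <;> linarith
  | u + 1, s' => by
    by_cases hu : u < H
    · simp only [stateDist_succ G s1 _ hu,
        stateDist_update_occupancyMix hσ hρ₁ hρ₂ hc₁ hc₂ hc u]
      exact sum_mul_sum_prod_update_occupancyMix G s1 k hσ hρ₁ hρ₂ hc₁ hc₂ ⟨u, hu⟩ _
    · simp [stateDist, hu]

theorem ValueVec_update_occupancyMix (hσ : IsProductPolicy σ) (hρ₁ : IsPolicy ρ₁)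
    (hρ₂ : IsPolicy ρ₂) (hc₁ : 0 ≤ c₁) (hc₂ : 0 ≤ c₂) (hc : c₁ + c₂ = 1) :
    ValueVec G k (Function.update σ k (occupancyMix G s1 σ k c₁ c₂ ρ₁ ρ₂)) s1 =
      c₁ • ValueVec G k (Function.update σ k ρ₁) s1 +
        c₂ • ValueVec G k (Function.update σ k ρ₂) s1 := by
  set ρ := occupancyMix G s1 σ k c₁ c₂ ρ₁ ρ₂
  -- the value collected from step `H - t` on, averaged over the state at that step, mixes linearly
  have key : ∀ t ≤ H, ∀ i,
      ∑ s, stateDist G (Function.update σ k ρ) s1 (H - t) s *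
          Vvec G k (Function.update σ k ρ) t s i =
        c₁ * ∑ s, stateDist G (Function.update σ k ρ₁) s1 (H - t) s *
            Vvec G k (Function.update σ k ρ₁) t s i +
          c₂ * ∑ s, stateDist G (Function.update σ k ρ₂) s1 (H - t) s *
            Vvec G k (Function.update σ k ρ₂) t s i := by
    intro t
    induction t with
    | zero => intro _ i; simp [Vvec]
    | succ t IH =>
      intro ht i
      set h : Fin H := ⟨H - (t + 1), by omega⟩
      have hh : (h : ℕ) + (t + 1) = H := by simp only [h]; omega
      have e := IH (by omega) i
      rw [show H - t = (h : ℕ) + 1 by simp only [h]; omega] at e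
      change ∑ s, stateDist G _ s1 h s * _ = c₁ * ∑ s, stateDist G _ s1 h s * _ +
        c₂ * ∑ s, stateDist G _ s1 h s * _
      rw [sum_stateDist_mul_Vvec_succ G s1 k _ h hh, sum_stateDist_mul_Vvec_succ G s1 k _ h hh,
        sum_stateDist_mul_Vvec_succ G s1 k _ h hh, e]
      simp only [ρ, stateDist_update_occupancyMix G s1 k hσ hρ₁ hρ₂ hc₁ hc₂ hc,
        sum_mul_sum_prod_update_occupancyMix G s1 k hσ hρ₁ hρ₂ hc₁ hc₂]
      ring
  funext i
  simpa [stateDist, ValueVec] using key H le_rfl i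

end OccupancyMix

def achievableValues (G : MOMG N M H S A) (s1 : S) (σ : ∀ j, Fin H → S → A j → ℝ) (k : Fin N) :
    Set (Fin M → ℝ) :=
  {v | ∃ ρ, IsPolicy ρ ∧ ValueVec G k (Function.update σ k ρ) s1 = v}

theorem convex_achievableValues (G : MOMG N M H S A) (s1 : S) {σ : ∀ j, Fin H → S → A j → ℝ}
    (hσ : IsProductPolicy σ) (k : Fin N) : Convex ℝ (achievableValues G s1 σ k) := by
  classical
  rintro _ ⟨ρ₁, hρ₁, rfl⟩ _ ⟨ρ₂, hρ₂, rfl⟩ c₁ c₂ hc₁ hc₂ hc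
  exact ⟨_, isPolicy_occupancyMix G s1 k hσ hρ₁ hρ₂ hc₁ hc₂,
    ValueVec_update_occupancyMix G s1 k hσ hρ₁ hρ₂ hc₁ hc₂ hc⟩

theorem achievableValues_eq_convexHull (G : MOMG N M H S A) (s1 : S)
    {σ : ∀ j, Fin H → S → A j → ℝ} (hσ : IsProductPolicy σ) (k : Fin N) [DecidableEq (A k)] :
    achievableValues G s1 σ k = convexHull ℝ (Set.range fun d : Fin H × S → A k =>
      ValueVec G k (Function.update σ k (detPolicy d)) s1) := by
  refine subset_antisymm ?_ (convexHull_min ?_ (convex_achievableValues G s1 hσ k))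
  · rintro _ ⟨ρ, hρ, rfl⟩
    exact ValueVec_update_mem_convexHull G s1 σ k hρ
  · rintro _ ⟨d, rfl⟩
    exact ⟨_, isPolicy_detPolicy d, rfl⟩

theorem PNE_is_scalarizedNE_general {N M H : ℕ} (hM : 1 ≤ M)
    (S : Type) (A : Fin N → Type) [Fintype S]
    [∀ j, Fintype (A j)]
    (G : MOMG N M H S A) (s1 : S)
    (πstar : (j : Fin N) → Fin H → S → A j → ℝ)
    (hprod : IsProductPolicy πstar)
    (hPNE : IsPNE G s1 πstar) :
    ∃ lam : Fin N → Fin M → ℝ,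
      (∀ k, InOpenSimplex (lam k)) ∧ IsScalarizedNE G s1 lam πstar := by
  classical
  have supporting : ∀ k, ∃ w, InOpenSimplex w ∧
      ∀ v ∈ achievableValues G s1 πstar k, w ⬝ᵥ v ≤ w ⬝ᵥ ValueVec G k πstar s1 := by
    intro k
    rw [achievableValues_eq_convexHull G s1 hprod k]
    refine exists_openSimplex_weights_of_not_paretoDom hM _ _ fun v hv => ?_
    rw [← achievableValues_eq_convexHull G s1 hprod k] at hv
    obtain ⟨ρ, hρ, rfl⟩ := hv
    exact hPNE k ρ hρ
  choose lam hlam hle using supporting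
  exact ⟨lam, hlam, fun k ρ hρ => hle k _ ⟨ρ, hρ, rfl⟩⟩

/-- **Every PNE is a Nash equilibrium of some strictly positive scalarization.**
For any Pareto-Nash Equilibrium `π*` of a finite MOMG, there exists a preference
profile `Λ = (λ^1,…,λ^N)` with every `λ^k ∈ Δ_M^o` (strictly positive entries
summing to 1) such that `π*` is a Nash equilibrium of the scalarized game `G_Λ`. -/
theorem PNE_is_scalarizedNE {N M H : ℕ} (hN : 1 ≤ N) (hH : 1 ≤ H) (hM : 1 ≤ M)
    (S : Type) (A : Fin N → Type) [Fintype S] [Nonempty S]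
    [∀ j, Fintype (A j)] [∀ j, Nonempty (A j)]
    (G : MOMG N M H S A) (s1 : S)
    (πstar : (j : Fin N) → Fin H → S → A j → ℝ)
    (hprod : IsProductPolicy πstar)
    (hPNE : IsPNE G s1 πstar) :
    ∃ lam : Fin N → Fin M → ℝ,
      (∀ k, InOpenSimplex (lam k)) ∧ IsScalarizedNE G s1 lam πstar :=
  PNE_is_scalarizedNE_general hM S A G s1 πstar hprod hPNE
end

section
/- If a product policy π of a finite MOMG is a Pareto-Nash Equilibrium, then its Pareto-Nash Gap is zero: PNG(π) = 0, where PNG(π) := max_{k ∈ [N]} sup_{π'_k} inf_{λ ∈ Δ_M^o} λ^⊤( V_{k,1}^{(π'_k, π_{-k})}(s_1) − V_{k,1}^{π}(s_1) ). -/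
open Finset

variable {N M H : ℕ} {S : Type} {A : Fin N → Type} [Fintype S] [∀ j, Fintype (A j)]

/-- The Pareto-Nash Gap of a product policy `π`:
`PNG(π) = max_k sup_{π'_k} inf_{λ ∈ Δ_M^o} λ⬝(V_{k,1}^{(π'_k,π_{-k})}(s_1) − V_{k,1}^π(s_1))`. -/
noncomputable def PNG (G : MOMG N M H S A) (s1 : S)
    (π : (j : Fin N) → Fin H → S → A j → ℝ) : ℝ :=
  ⨆ k : Fin N, ⨆ ρ : {ρ : Fin H → S → A k → ℝ // IsPolicy ρ},
    ⨅ l : {l : Fin M → ℝ // InOpenSimplex l},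
      ∑ i, l.1 i *
        (ValueVec G k (Function.update π k ρ.1) s1 i - ValueVec G k π s1 i)

lemma uniform_inOpenSimplex {M : ℕ} (hM : 1 ≤ M) :
    InOpenSimplex (fun _ : Fin M => (M : ℝ)⁻¹) := by
  have hMpos : (0:ℝ) < M := by exact_mod_cast hM
  constructor
  · intro i; positivity
  · simp [Finset.sum_const, Finset.card_univ]
    field_simp

lemma exists_open_simplex_dot_nonpos {M : ℕ} (hM : 1 ≤ M) (d : Fin M → ℝ)
    (hd : ¬ ((∀ i, 0 ≤ d i) ∧ ∃ i, 0 < d i)) :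
    ∃ l : Fin M → ℝ, InOpenSimplex l ∧ ∑ i, l i * d i ≤ 0 := by
  by_cases h : ∀ i, d i ≤ 0
  · refine ⟨fun _ => (M : ℝ)⁻¹, uniform_inOpenSimplex hM, ?_⟩
    apply Finset.sum_nonpos
    intro i _
    have hMpos : (0:ℝ) < M := by exact_mod_cast hM
    exact mul_nonpos_of_nonneg_of_nonpos (by positivity) (h i)
  · push_neg at h
    obtain ⟨i1, hi1⟩ := h
    have : ¬ ∀ i, 0 ≤ d i := fun hall => hd ⟨hall, ⟨i1, hi1⟩⟩
    push_neg at this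
    obtain ⟨i0, hi0⟩ := this
    have hMpos : (0:ℝ) < M := by exact_mod_cast hM
    set C : ℝ := M * (∑ j, |d j|) + 1 with hC
    have hsumabs : (0:ℝ) ≤ ∑ j, |d j| := Finset.sum_nonneg fun j _ => abs_nonneg _
    have hCpos : 0 < C := by positivity
    set ε : ℝ := min (-d i0 / C) ((M:ℝ)⁻¹) with hε
    have hεpos : 0 < ε := lt_min (div_pos (by linarith) hCpos) (by positivity)
    have hε1 : ε ≤ (M:ℝ)⁻¹ := min_le_right _ _
    have hεC : ε * C ≤ -d i0 := by
      have := min_le_left (-d i0 / C) ((M:ℝ)⁻¹)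
      calc ε * C ≤ (-d i0 / C) * C := by
            apply mul_le_mul_of_nonneg_right this hCpos.le
        _ = -d i0 := by field_simp
    refine ⟨fun j => if j = i0 then 1 - ((M:ℝ) - 1) * ε else ε, ?_, ?_⟩
    · constructor
      · intro i
        by_cases hi : i = i0
        · rw [hi]
          show 0 < if i0 = i0 then 1 - ((M:ℝ) - 1) * ε else ε
          rw [if_pos rfl]
          have : ((M:ℝ) - 1) * ε ≤ ((M:ℝ) - 1) * (M:ℝ)⁻¹ := by
            apply mul_le_mul_of_nonneg_left hε1
            have : (1:ℝ) ≤ M := by exact_mod_cast hM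
            linarith
          have h2 : ((M:ℝ) - 1) * (M:ℝ)⁻¹ < 1 := by
            rw [sub_mul, mul_inv_cancel₀ hMpos.ne']
            have : 0 < (M:ℝ)⁻¹ := by positivity
            linarith
          linarith
        · show 0 < if i = i0 then 1 - ((M:ℝ) - 1) * ε else ε
          rw [if_neg hi]; exact hεpos
      · show ∑ j, (if j = i0 then 1 - ((M:ℝ) - 1) * ε else ε) = 1
        rw [← Finset.add_sum_erase _ _ (Finset.mem_univ i0), if_pos rfl]
        have hsum : ∑ j ∈ Finset.univ.erase i0, (if j = i0 then 1 - ((M:ℝ) - 1) * ε else ε)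
            = ((M:ℝ) - 1) * ε := by
          rw [Finset.sum_congr rfl (fun j hj => if_neg (Finset.ne_of_mem_erase hj))]
          rw [Finset.sum_const, Finset.card_erase_of_mem (Finset.mem_univ i0),
            Finset.card_univ, Fintype.card_fin]
          rw [nsmul_eq_mul, Nat.cast_sub hM]
          simp
        rw [hsum]; ring
    · show ∑ j, (if j = i0 then 1 - ((M:ℝ) - 1) * ε else ε) * d j ≤ 0
      rw [← Finset.add_sum_erase _ _ (Finset.mem_univ i0), if_pos rfl]
      have hsum : ∑ j ∈ Finset.univ.erase i0,
          (if j = i0 then 1 - ((M:ℝ) - 1) * ε else ε) * d j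
          = ε * ∑ j ∈ Finset.univ.erase i0, d j := by
        rw [Finset.mul_sum]
        exact Finset.sum_congr rfl fun j hj => by
          rw [if_neg (Finset.ne_of_mem_erase hj)]
      rw [hsum]
      have hbracket : ∑ j ∈ Finset.univ.erase i0, d j - ((M:ℝ) - 1) * d i0 ≤ C := by
        have h1 : ∑ j ∈ Finset.univ.erase i0, d j ≤ ∑ j, |d j| := by
          calc ∑ j ∈ Finset.univ.erase i0, d j
              ≤ ∑ j ∈ Finset.univ.erase i0, |d j| :=
                Finset.sum_le_sum fun j _ => le_abs_self _
            _ ≤ ∑ j, |d j| :=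
                Finset.sum_le_sum_of_subset_of_nonneg (Finset.erase_subset _ _)
                  (fun j _ _ => abs_nonneg _)
        have h2 : -((M:ℝ) - 1) * d i0 ≤ ((M:ℝ) - 1) * |d i0| := by
          have hM1 : (0:ℝ) ≤ (M:ℝ) - 1 := by
            have : (1:ℝ) ≤ M := by exact_mod_cast hM
            linarith
          calc -((M:ℝ) - 1) * d i0 = ((M:ℝ) - 1) * (-d i0) := by ring
            _ ≤ ((M:ℝ) - 1) * |d i0| :=
                mul_le_mul_of_nonneg_left (neg_le_abs _) hM1
        have h3 : |d i0| ≤ ∑ j, |d j| :=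
          Finset.single_le_sum (fun j _ => abs_nonneg (d j)) (Finset.mem_univ i0)
        have hM1 : (0:ℝ) ≤ (M:ℝ) - 1 := by
          have : (1:ℝ) ≤ M := by exact_mod_cast hM
          linarith
        nlinarith
      have key : (1 - ((M:ℝ) - 1) * ε) * d i0 + ε * ∑ j ∈ Finset.univ.erase i0, d j
          = d i0 + ε * (∑ j ∈ Finset.univ.erase i0, d j - ((M:ℝ) - 1) * d i0) := by ring
      rw [key]
      have : ε * (∑ j ∈ Finset.univ.erase i0, d j - ((M:ℝ) - 1) * d i0) ≤ ε * C :=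
        mul_le_mul_of_nonneg_left hbracket hεpos.le
      linarith

lemma dot_bddBelow {M : ℕ} (d : Fin M → ℝ) :
    BddBelow (Set.range fun l : {l : Fin M → ℝ // InOpenSimplex l} =>
      ∑ i, l.1 i * d i) := by
  refine ⟨-(∑ i, |d i|), ?_⟩
  rintro x ⟨l, rfl⟩
  have hle : ∀ i, l.1 i ≤ 1 := by
    intro i
    have := Finset.single_le_sum (fun j (_ : j ∈ Finset.univ) => (l.2.1 j).le)
      (Finset.mem_univ i)
    rw [l.2.2] at this
    exact this
  have : ∀ i ∈ Finset.univ, -|d i| ≤ l.1 i * d i := by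
    intro i _
    have h1 : |l.1 i * d i| ≤ |d i| := by
      rw [abs_mul, abs_of_pos (l.2.1 i)]
      calc l.1 i * |d i| ≤ 1 * |d i| :=
          mul_le_mul_of_nonneg_right (hle i) (abs_nonneg _)
        _ = |d i| := one_mul _
    linarith [neg_abs_le (l.1 i * d i), neg_le_neg h1]
  calc -(∑ i, |d i|) = ∑ i, -|d i| := by rw [Finset.sum_neg_distrib]
    _ ≤ ∑ i, l.1 i * d i := Finset.sum_le_sum this

/-- **A Pareto-Nash Equilibrium has zero Pareto-Nash Gap.** -/
theorem PNG_eq_zero_of_isPNE {N M H : ℕ} (hN : 1 ≤ N) (hH : 1 ≤ H) (hM : 1 ≤ M)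
    (S : Type) (A : Fin N → Type) [Fintype S] [Nonempty S]
    [∀ j, Fintype (A j)] [∀ j, Nonempty (A j)]
    (G : MOMG N M H S A) (s1 : S)
    (π : (j : Fin N) → Fin H → S → A j → ℝ)
    (hprod : IsProductPolicy π)
    (hPNE : IsPNE G s1 π) :
    PNG G s1 π = 0 := by
  have hMN : Nonempty {l : Fin M → ℝ // InOpenSimplex l} :=
    ⟨⟨fun _ => (M : ℝ)⁻¹, uniform_inOpenSimplex hM⟩⟩
  have hkN : Nonempty (Fin N) := ⟨⟨0, hN⟩⟩
  -- the inner infimum is nonpositive for every deviation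
  have hinf_le : ∀ (k : Fin N) (ρ : {ρ : Fin H → S → A k → ℝ // IsPolicy ρ}),
      (⨅ l : {l : Fin M → ℝ // InOpenSimplex l},
        ∑ i, l.1 i * (ValueVec G k (Function.update π k ρ.1) s1 i
          - ValueVec G k π s1 i)) ≤ 0 := by
    intro k ρ
    have hnd : ¬ ((∀ i, (0:ℝ) ≤ ValueVec G k (Function.update π k ρ.1) s1 i
        - ValueVec G k π s1 i) ∧ ∃ i, (0:ℝ) < ValueVec G k (Function.update π k ρ.1) s1 i
        - ValueVec G k π s1 i) := by
      intro ⟨h1, i, h2⟩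
      exact hPNE k ρ.1 ρ.2 ⟨fun i' => by linarith [h1 i'], ⟨i, by linarith⟩⟩
    obtain ⟨l, hl, hldot⟩ := exists_open_simplex_dot_nonpos hM _ hnd
    exact ciInf_le_of_le (dot_bddBelow _) ⟨l, hl⟩ hldot
  -- taking the trivial deviation `π k` gives value 0
  have hzero : ∀ k : Fin N,
      (⨅ l : {l : Fin M → ℝ // InOpenSimplex l},
        ∑ i, l.1 i * (ValueVec G k (Function.update π k (π k)) s1 i
          - ValueVec G k π s1 i)) = 0 := by
    intro k
    have hupd : Function.update π k (π k) = π := Function.update_eq_self k π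
    have : ∀ l : {l : Fin M → ℝ // InOpenSimplex l},
        ∑ i, l.1 i * (ValueVec G k (Function.update π k (π k)) s1 i
          - ValueVec G k π s1 i) = 0 := by
      intro l
      rw [hupd]
      simp
    calc (⨅ l : {l : Fin M → ℝ // InOpenSimplex l},
          ∑ i, l.1 i * (ValueVec G k (Function.update π k (π k)) s1 i
            - ValueVec G k π s1 i))
        = ⨅ _ : {l : Fin M → ℝ // InOpenSimplex l}, (0:ℝ) := by
          exact iInf_congr this
      _ = 0 := ciInf_const
  -- the supremum over deviations equals 0 for each k
  have hsup : ∀ k : Fin N,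
      (⨆ ρ : {ρ : Fin H → S → A k → ℝ // IsPolicy ρ},
        ⨅ l : {l : Fin M → ℝ // InOpenSimplex l},
          ∑ i, l.1 i * (ValueVec G k (Function.update π k ρ.1) s1 i
            - ValueVec G k π s1 i)) = 0 := by
    intro k
    haveI : Nonempty {ρ : Fin H → S → A k → ℝ // IsPolicy ρ} := ⟨⟨π k, hprod k⟩⟩
    have hbdd : BddAbove (Set.range fun ρ : {ρ : Fin H → S → A k → ℝ // IsPolicy ρ} =>
        ⨅ l : {l : Fin M → ℝ // InOpenSimplex l},
          ∑ i, l.1 i * (ValueVec G k (Function.update π k ρ.1) s1 i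
            - ValueVec G k π s1 i)) := by
      refine ⟨0, ?_⟩
      rintro x ⟨ρ, rfl⟩
      exact hinf_le k ρ
    apply le_antisymm
    · exact ciSup_le fun ρ => hinf_le k ρ
    · have := le_ciSup hbdd (⟨π k, hprod k⟩ :
        {ρ : Fin H → S → A k → ℝ // IsPolicy ρ})
      rw [hzero k] at this
      exact this
  unfold PNG
  calc (⨆ k : Fin N, ⨆ ρ : {ρ : Fin H → S → A k → ℝ // IsPolicy ρ},
        ⨅ l : {l : Fin M → ℝ // InOpenSimplex l},
          ∑ i, l.1 i * (ValueVec G k (Function.update π k ρ.1) s1 i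
            - ValueVec G k π s1 i))
      = ⨆ _ : Fin N, (0:ℝ) := iSup_congr hsup
    _ = 0 := ciSup_const
end

section
/- Let G be a finite MOMG and let π* be a Weak Pareto-Nash Equilibrium of G, where all policies are stationary stochastic policies. Then there exists a preference profile Λ = (λ^1,…,λ^N) with every λ^k ∈ Δ_M (nonnegative entries summing to 1) such that π* is a Nash equilibrium of the linearly scalarized game G_Λ. -/
open Finset

variable {N M H : ℕ} {S : Type} {A : Fin N → Type} [Fintype S] [∀ j, Fintype (A j)]

section AuxDev

open scoped Classical
set_option linter.unusedSectionVars false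

variable {N M H : ℕ} {S : Type} {A : Fin N → Type} [Fintype S] [∀ j, Fintype (A j)]

/-- forward state distribution at step `h` (0-indexed) -/
noncomputable def muF (G : MOMG N M H S A) (s1 : S)
    (π : (j : Fin N) → Fin H → S → A j → ℝ) : ℕ → S → ℝ
  | 0 => fun s => if s = s1 then 1 else 0
  | (h+1) => fun s' =>
      if hh : h < H then
        ∑ s, ∑ a : (j : Fin N) → A j,
          muF G s1 π h s * (∏ j, π j ⟨h, hh⟩ s (a j)) * G.P ⟨h, hh⟩ s a s'
      else 0

/-- expected reward collected at step `h` -/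
noncomputable def stepR (G : MOMG N M H S A) (s1 : S) (k : Fin N)
    (π : (j : Fin N) → Fin H → S → A j → ℝ) (h : ℕ) (i : Fin M) : ℝ :=
  if hh : h < H then
    ∑ s, ∑ a : (j : Fin N) → A j,
      muF G s1 π h s * (∏ j, π j ⟨h, hh⟩ s (a j)) * G.r k ⟨h, hh⟩ s a i
  else 0

lemma muF_nonneg (G : MOMG N M H S A) (s1 : S)
    (π : (j : Fin N) → Fin H → S → A j → ℝ) (hπ : IsProductPolicy π) :
    ∀ h s, 0 ≤ muF G s1 π h s := by
  intro h
  induction h with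
  | zero => intro s; simp only [muF]; split <;> norm_num
  | succ h ih =>
      intro s'
      simp only [muF]
      split
      · apply Finset.sum_nonneg; intro s _
        apply Finset.sum_nonneg; intro a _
        have h1 : 0 ≤ ∏ j, π j ⟨h, by assumption⟩ s (a j) :=
          Finset.prod_nonneg fun j _ => ((hπ j) _ s).1 (a j)
        exact mul_nonneg (mul_nonneg (ih s) h1) (G.P_nonneg _ s a s')
      · exact le_refl 0

lemma triple_comm {α β γ : Type*} [Fintype α] [Fintype β] [Fintype γ] (F : α → β → γ → ℝ) :
    ∑ a, ∑ b, ∑ c, F a b c = ∑ c, ∑ a, ∑ b, F a b c := by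
  calc ∑ a, ∑ b, ∑ c, F a b c
      = ∑ a, ∑ c, ∑ b, F a b c := Finset.sum_congr rfl fun a _ => Finset.sum_comm
    _ = ∑ c, ∑ a, ∑ b, F a b c := Finset.sum_comm

lemma sum_muF_Vvec (G : MOMG N M H S A) (s1 : S) (k : Fin N)
    (π : (j : Fin N) → Fin H → S → A j → ℝ) (i : Fin M) :
    ∀ t, t ≤ H → ∑ s, muF G s1 π (H - t) s * Vvec G k π t s i
      = ∑ h ∈ Finset.Ico (H - t) H, stepR G s1 k π h i := by
  intro t
  induction t with
  | zero =>
      intro _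
      simp [Vvec]
  | succ t ih =>
      intro ht1
      have hlt : H - (t+1) < H := by omega
      have hsucc : H - (t+1) + 1 = H - t := by omega
      have hVv : ∀ s, Vvec G k π (t+1) s i =
          ∑ a : (j : Fin N) → A j, (∏ j, π j ⟨H - (t+1), hlt⟩ s (a j)) *
            (G.r k ⟨H - (t+1), hlt⟩ s a i +
              ∑ s', G.P ⟨H - (t+1), hlt⟩ s a s' * Vvec G k π t s' i) := by
        intro s
        rw [Vvec, dif_pos hlt]
      calc ∑ s, muF G s1 π (H - (t+1)) s * Vvec G k π (t+1) s i
          = ∑ s, ∑ a : (j : Fin N) → A j,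
              (muF G s1 π (H - (t+1)) s * (∏ j, π j ⟨H - (t+1), hlt⟩ s (a j)) *
                G.r k ⟨H - (t+1), hlt⟩ s a i +
              ∑ s', (muF G s1 π (H - (t+1)) s * (∏ j, π j ⟨H - (t+1), hlt⟩ s (a j)) *
                G.P ⟨H - (t+1), hlt⟩ s a s') * Vvec G k π t s' i) := by
            refine Finset.sum_congr rfl fun s _ => ?_
            rw [hVv s, Finset.mul_sum]
            refine Finset.sum_congr rfl fun a _ => ?_
            simp only [mul_add, Finset.mul_sum]
            congr 1
            · ring
            · exact Finset.sum_congr rfl fun s' _ => by ring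
        _ = stepR G s1 k π (H - (t+1)) i +
            ∑ s', muF G s1 π (H - (t+1) + 1) s' * Vvec G k π t s' i := by
            simp only [Finset.sum_add_distrib]
            congr 1
            · rw [stepR, dif_pos hlt]
            · rw [triple_comm]
              refine Finset.sum_congr rfl fun s' _ => ?_
              conv_rhs => rw [muF]
              simp only [dif_pos hlt]
              rw [Finset.sum_mul]
              refine Finset.sum_congr rfl fun s _ => ?_
              rw [Finset.sum_mul]
        _ = ∑ h ∈ Finset.Ico (H - (t+1)) H, stepR G s1 k π h i := by
            rw [hsucc, ih (by omega), Finset.sum_eq_sum_Ico_succ_bot hlt, hsucc]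

lemma valueVec_eq_sum_stepR (G : MOMG N M H S A) (s1 : S) (k : Fin N)
    (π : (j : Fin N) → Fin H → S → A j → ℝ) (i : Fin M) :
    ValueVec G k π s1 i = ∑ h ∈ Finset.range H, stepR G s1 k π h i := by
  have h := sum_muF_Vvec G s1 k π i H le_rfl
  rw [Nat.sub_self] at h
  have hmu0 : ∀ s, muF G s1 π 0 s = if s = s1 then 1 else 0 := fun s => rfl
  rw [Finset.range_eq_Ico, ← h]
  rw [Finset.sum_congr rfl (fun s _ => by rw [hmu0 s])]
  simp only [ite_mul, one_mul, zero_mul]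
  rw [Finset.sum_ite_eq' Finset.univ s1 (fun s => Vvec G k π H s i)]
  simp [ValueVec]

lemma prod_update_split (πst : (j : Fin N) → Fin H → S → A j → ℝ) (k : Fin N)
    (ρ : Fin H → S → A k → ℝ) (h' : Fin H) (s : S) (a : (j : Fin N) → A j) :
    ∏ j, Function.update πst k ρ j h' s (a j)
      = ρ h' s (a k) * ∏ j ∈ Finset.univ.erase k, πst j h' s (a j) := by
  rw [← Finset.mul_prod_erase Finset.univ _ (Finset.mem_univ k)]
  congr 1
  · rw [Function.update_self]
  · exact Finset.prod_congr rfl fun j hj => by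
      rw [Function.update_of_ne (Finset.ne_of_mem_erase hj)]

lemma update_isProd (πst : (j : Fin N) → Fin H → S → A j → ℝ) (k : Fin N)
    (ρ : Fin H → S → A k → ℝ) (hπ : IsProductPolicy πst) (hρ : IsPolicy ρ) :
    IsProductPolicy (Function.update πst k ρ) := by
  intro j
  by_cases hj : j = k
  · subst hj; rwa [Function.update_self]
  · rw [Function.update_of_ne hj]; exact hπ j

lemma mix_key {m1 m2 x y c c' : ℝ} (hc : 0 ≤ c) (hc' : 0 ≤ c')
    (h1 : 0 ≤ m1) (h2 : 0 ≤ m2) :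
    (c*m1 + c'*m2) *
      (if c*m1 + c'*m2 = 0 then x else (c*m1*x + c'*m2*y)/(c*m1 + c'*m2))
      = c*m1*x + c'*m2*y := by
  split_ifs with h
  · have e1 : c*m1 = 0 := by nlinarith
    have e2 : c'*m2 = 0 := by nlinarith
    rw [h, e1, e2]; ring
  · field_simp

/-- the state-distribution-weighted mixture of two deviation policies -/
noncomputable def mixPol (G : MOMG N M H S A) (s1 : S)
    (πst : (j : Fin N) → Fin H → S → A j → ℝ) (k : Fin N)
    (ρ1 ρ2 : Fin H → S → A k → ℝ) (c c' : ℝ) (h : Fin H) (s : S) (b : A k) : ℝ :=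
  if c * muF G s1 (Function.update πst k ρ1) h.1 s
      + c' * muF G s1 (Function.update πst k ρ2) h.1 s = 0
  then ρ1 h s b
  else (c * muF G s1 (Function.update πst k ρ1) h.1 s * ρ1 h s b
      + c' * muF G s1 (Function.update πst k ρ2) h.1 s * ρ2 h s b)
    / (c * muF G s1 (Function.update πst k ρ1) h.1 s
      + c' * muF G s1 (Function.update πst k ρ2) h.1 s)

section Mix

variable (G : MOMG N M H S A) (s1 : S)
  (πst : (j : Fin N) → Fin H → S → A j → ℝ) (k : Fin N)
  (ρ1 ρ2 : Fin H → S → A k → ℝ) (c c' : ℝ)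

lemma mixPol_isPolicy (hπ : IsProductPolicy πst) (hρ1 : IsPolicy ρ1) (hρ2 : IsPolicy ρ2)
    (hc : 0 ≤ c) (hc' : 0 ≤ c') :
    IsPolicy (mixPol G s1 πst k ρ1 ρ2 c c') := by
  intro h s
  have h1 := muF_nonneg G s1 _ (update_isProd πst k ρ1 hπ hρ1) h.1 s
  have h2 := muF_nonneg G s1 _ (update_isProd πst k ρ2 hπ hρ2) h.1 s
  constructor
  · intro b
    simp only [mixPol]
    split_ifs with hd
    · exact (hρ1 h s).1 b
    · apply div_nonneg
      · have := (hρ1 h s).1 b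
        have := (hρ2 h s).1 b
        positivity
      · positivity
  · simp only [mixPol]
    split_ifs with hd
    · exact (hρ1 h s).2
    · rw [← Finset.sum_div]
      rw [show (∑ b, (c * muF G s1 (Function.update πst k ρ1) h.1 s * ρ1 h s b
          + c' * muF G s1 (Function.update πst k ρ2) h.1 s * ρ2 h s b))
          = c * muF G s1 (Function.update πst k ρ1) h.1 s
            + c' * muF G s1 (Function.update πst k ρ2) h.1 s from by
        rw [Finset.sum_add_distrib, ← Finset.mul_sum, ← Finset.mul_sum,
          (hρ1 h s).2, (hρ2 h s).2, mul_one, mul_one]]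
      exact div_self hd

lemma mix_sum_split (hπ : IsProductPolicy πst) (hρ1 : IsPolicy ρ1) (hρ2 : IsPolicy ρ2)
    (hc : 0 ≤ c) (hc' : 0 ≤ c') (h : ℕ) (hh : h < H)
    (hmu : ∀ s, muF G s1 (Function.update πst k (mixPol G s1 πst k ρ1 ρ2 c c')) h s
      = c * muF G s1 (Function.update πst k ρ1) h s
        + c' * muF G s1 (Function.update πst k ρ2) h s)
    (f : S → ((j : Fin N) → A j) → ℝ) :
    ∑ s, ∑ a : (j : Fin N) → A j,
        muF G s1 (Function.update πst k (mixPol G s1 πst k ρ1 ρ2 c c')) h s *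
          (∏ j, Function.update πst k (mixPol G s1 πst k ρ1 ρ2 c c') j ⟨h, hh⟩ s (a j)) * f s a
      = c * ∑ s, ∑ a : (j : Fin N) → A j,
          muF G s1 (Function.update πst k ρ1) h s *
            (∏ j, Function.update πst k ρ1 j ⟨h, hh⟩ s (a j)) * f s a
      + c' * ∑ s, ∑ a : (j : Fin N) → A j,
          muF G s1 (Function.update πst k ρ2) h s *
            (∏ j, Function.update πst k ρ2 j ⟨h, hh⟩ s (a j)) * f s a := by
  rw [Finset.mul_sum, Finset.mul_sum, ← Finset.sum_add_distrib]
  refine Finset.sum_congr rfl fun s _ => ?_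
  rw [Finset.mul_sum, Finset.mul_sum, ← Finset.sum_add_distrib]
  refine Finset.sum_congr rfl fun a _ => ?_
  rw [prod_update_split, prod_update_split, prod_update_split, hmu s]
  have h1 := muF_nonneg G s1 _ (update_isProd πst k ρ1 hπ hρ1) h s
  have h2 := muF_nonneg G s1 _ (update_isProd πst k ρ2 hπ hρ2) h s
  have key := mix_key (x := ρ1 ⟨h, hh⟩ s (a k)) (y := ρ2 ⟨h, hh⟩ s (a k)) hc hc' h1 h2
  simp only [mixPol]
  linear_combination ((∏ j ∈ Finset.univ.erase k, πst j ⟨h, hh⟩ s (a j)) * f s a) * key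

end Mix

section Mix2

variable (G : MOMG N M H S A) (s1 : S)
  (πst : (j : Fin N) → Fin H → S → A j → ℝ) (k : Fin N)
  (ρ1 ρ2 : Fin H → S → A k → ℝ) (c c' : ℝ)

lemma muF_mix (hπ : IsProductPolicy πst) (hρ1 : IsPolicy ρ1) (hρ2 : IsPolicy ρ2)
    (hc : 0 ≤ c) (hc' : 0 ≤ c') (hcc : c + c' = 1) :
    ∀ h s, muF G s1 (Function.update πst k (mixPol G s1 πst k ρ1 ρ2 c c')) h s
      = c * muF G s1 (Function.update πst k ρ1) h s
        + c' * muF G s1 (Function.update πst k ρ2) h s := by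
  intro h
  induction h with
  | zero =>
      intro s
      simp only [muF]
      split_ifs with hs
      · linarith
      · ring
  | succ h ih =>
      intro s'
      simp only [muF]
      split_ifs with hh
      · have := mix_sum_split G s1 πst k ρ1 ρ2 c c' hπ hρ1 hρ2 hc hc' h hh ih
          (fun s a => G.P ⟨h, hh⟩ s a s')
        exact this
      · ring

lemma stepR_mix (hπ : IsProductPolicy πst) (hρ1 : IsPolicy ρ1) (hρ2 : IsPolicy ρ2)
    (hc : 0 ≤ c) (hc' : 0 ≤ c') (hcc : c + c' = 1) (h : ℕ) (i : Fin M) :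
    stepR G s1 k (Function.update πst k (mixPol G s1 πst k ρ1 ρ2 c c')) h i
      = c * stepR G s1 k (Function.update πst k ρ1) h i
        + c' * stepR G s1 k (Function.update πst k ρ2) h i := by
  simp only [stepR]
  split_ifs with hh
  · exact mix_sum_split G s1 πst k ρ1 ρ2 c c' hπ hρ1 hρ2 hc hc' h hh
      (muF_mix G s1 πst k ρ1 ρ2 c c' hπ hρ1 hρ2 hc hc' hcc h)
      (fun s a => G.r k ⟨h, hh⟩ s a i)
  · ring

lemma valueVec_mix (hπ : IsProductPolicy πst) (hρ1 : IsPolicy ρ1) (hρ2 : IsPolicy ρ2)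
    (hc : 0 ≤ c) (hc' : 0 ≤ c') (hcc : c + c' = 1) (i : Fin M) :
    ValueVec G k (Function.update πst k (mixPol G s1 πst k ρ1 ρ2 c c')) s1 i
      = c * ValueVec G k (Function.update πst k ρ1) s1 i
        + c' * ValueVec G k (Function.update πst k ρ2) s1 i := by
  rw [valueVec_eq_sum_stepR, valueVec_eq_sum_stepR, valueVec_eq_sum_stepR,
    Finset.mul_sum, Finset.mul_sum, ← Finset.sum_add_distrib]
  exact Finset.sum_congr rfl fun h _ =>
    stepR_mix G s1 πst k ρ1 ρ2 c c' hπ hρ1 hρ2 hc hc' hcc h i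

end Mix2

lemma exists_scalarization (_hM : 1 ≤ M) (G : MOMG N M H S A) (s1 : S) (k : Fin N)
    (πst : (j : Fin N) → Fin H → S → A j → ℝ) (hπ : IsProductPolicy πst)
    (hW : ∀ ρ : Fin H → S → A k → ℝ, IsPolicy ρ →
      ¬ StrictParetoDom (ValueVec G k (Function.update πst k ρ) s1)
        (ValueVec G k πst s1)) :
    ∃ l : Fin M → ℝ, InSimplex l ∧ ∀ ρ : Fin H → S → A k → ℝ, IsPolicy ρ →
      ∑ i, l i * ValueVec G k (Function.update πst k ρ) s1 i
        ≤ ∑ i, l i * ValueVec G k πst s1 i := by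
  classical
  set Vs := ValueVec G k πst s1 with hVsdef
  set D : Set (Fin M → ℝ) :=
    {v | ∃ ρ : Fin H → S → A k → ℝ, IsPolicy ρ ∧
      ValueVec G k (Function.update πst k ρ) s1 = v} with hDdef
  have hVsD : Vs ∈ D := ⟨πst k, hπ k, by rw [Function.update_eq_self]⟩
  have hDconv : Convex ℝ D := by
    rintro x ⟨ρ1, hρ1, rfl⟩ y ⟨ρ2, hρ2, rfl⟩ a b ha hb hab
    refine ⟨mixPol G s1 πst k ρ1 ρ2 a b,
      mixPol_isPolicy G s1 πst k ρ1 ρ2 a b hπ hρ1 hρ2 ha hb, funext fun i => ?_⟩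
    have := valueVec_mix G s1 πst k ρ1 ρ2 a b hπ hρ1 hρ2 ha hb hab i
    simpa using this
  set T : Set (Fin M → ℝ) := {v | ∀ i, Vs i < v i} with hTdef
  have hTeq : T = Set.pi Set.univ (fun i => Set.Ioi (Vs i)) := by
    ext v; simp [hTdef, Set.mem_pi, Set.mem_Ioi]
  have hTopen : IsOpen T := by
    rw [hTeq]; exact isOpen_set_pi Set.finite_univ fun i _ => isOpen_Ioi
  have hTconv : Convex ℝ T := by
    rw [hTeq]; exact convex_pi fun i _ => convex_Ioi _
  have hdisj : Disjoint T D := by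
    rw [Set.disjoint_left]
    rintro v hvT ⟨ρ, hρ, hveq⟩
    exact hW ρ hρ (fun i => by rw [hveq]; exact hvT i)
  obtain ⟨f, u, hfT, hfD⟩ := geometric_hahn_banach_open hTconv hTopen hDconv hdisj
  set e : Fin M → (Fin M → ℝ) := fun i => fun j => if i = j then 1 else 0 with hedef
  have hfx : ∀ x : Fin M → ℝ, f x = ∑ i, x i * f (e i) := by
    intro x
    conv_lhs => rw [pi_eq_sum_univ x]
    rw [map_sum]
    exact Finset.sum_congr rfl fun i _ => by rw [map_smul]; rfl
  have hVs1T : (fun j => Vs j + 1) ∈ T := fun j => by simp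
  have hfVs1 : f (fun j => Vs j + 1) < u := hfT _ hVs1T
  have hfe : ∀ i, f (e i) ≤ 0 := by
    intro i
    by_contra hpos
    push_neg at hpos
    obtain ⟨t0, ht0def⟩ : ∃ t0 : ℝ, t0 = (u - f (fun j => Vs j + 1)) / f (e i) + 1 :=
      ⟨_, rfl⟩
    have hdivpos : 0 < (u - f (fun j => Vs j + 1)) / f (e i) :=
      div_pos (by linarith) hpos
    have ht0 : 0 < t0 := by rw [ht0def]; linarith
    have hmem : (fun j => Vs j + 1 + t0 * e i j) ∈ T := by
      intro j
      have : 0 ≤ t0 * e i j := by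
        apply mul_nonneg ht0.le
        simp only [hedef]; split_ifs <;> norm_num
      simp only [hTdef, Set.mem_setOf_eq] at *
      linarith
    have heq : (fun j => Vs j + 1 + t0 * e i j) = (fun j => Vs j + 1) + t0 • e i := by
      funext j; simp [Pi.add_apply, Pi.smul_apply, smul_eq_mul]
    have hlt := hfT _ hmem
    rw [heq, map_add, map_smul, smul_eq_mul] at hlt
    have : t0 * f (e i) = (u - f (fun j => Vs j + 1)) + f (e i) := by
      rw [ht0def]
      field_simp
    linarith
  set l0 : Fin M → ℝ := fun i => -(f (e i)) with hl0def
  have hl0nn : ∀ i, 0 ≤ l0 i := fun i => by simp [hl0def]; linarith [hfe i]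
  set Csum : ℝ := ∑ i, l0 i with hCdef
  have hCnn : 0 ≤ Csum := Finset.sum_nonneg fun i _ => hl0nn i
  have hfl0 : ∀ x : Fin M → ℝ, ∑ i, l0 i * x i = -(f x) := by
    intro x
    rw [hfx x, ← Finset.sum_neg_distrib]
    exact Finset.sum_congr rfl fun i _ => by simp [hl0def]; ring
  have hfVs_le : f Vs ≤ u := by
    by_contra hgt
    push_neg at hgt
    have key : ∀ ε : ℝ, 0 < ε → f Vs < u + ε * Csum := by
      intro ε hε
      have hmem : (fun j => Vs j + ε) ∈ T := fun j => by
        simp only [hTdef, Set.mem_setOf_eq]; linarith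
      have hlt := hfT _ hmem
      have heq : (fun j => Vs j + ε) = Vs + ε • (fun _ => (1:ℝ)) := by
        funext j; simp
      rw [heq, map_add, map_smul, smul_eq_mul] at hlt
      have hone : f (fun _ => (1:ℝ)) = -Csum := by
        rw [hfx (fun _ => (1:ℝ)), hCdef]
        rw [← Finset.sum_neg_distrib]
        exact Finset.sum_congr rfl fun i _ => by simp [hl0def]
      rw [hone] at hlt
      linarith
    rcases eq_or_lt_of_le hCnn with hC0 | hCpos
    · have := key 1 one_pos
      rw [← hC0] at this
      linarith
    · have := key ((f Vs - u) / Csum) (div_pos (by linarith) hCpos)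
      rw [div_mul_cancel₀ _ (ne_of_gt hCpos)] at this
      linarith
  have hCpos : 0 < Csum := by
    rcases eq_or_lt_of_le hCnn with hC0 | h
    · exfalso
      have hall : ∀ i, l0 i = 0 := by
        intro i
        have := Finset.sum_eq_zero_iff_of_nonneg (fun i _ => hl0nn i) |>.mp hC0.symm
        exact this i (Finset.mem_univ i)
      have hf0 : ∀ x : Fin M → ℝ, f x = 0 := by
        intro x
        rw [hfx x]
        apply Finset.sum_eq_zero
        intro i _
        have : f (e i) = 0 := by have := hall i; simp [hl0def] at this; linarith
        rw [this, mul_zero]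
      have h1 : f (fun j => Vs j + 1) = 0 := hf0 _
      have h2 := hfD Vs hVsD
      rw [hf0 Vs] at h2
      linarith
    · exact h
  refine ⟨fun i => l0 i / Csum, ⟨fun i => div_nonneg (hl0nn i) hCnn, ?_⟩, ?_⟩
  · show ∑ i, l0 i / Csum = 1
    rw [← Finset.sum_div]
    exact div_self (ne_of_gt hCpos)
  · intro ρ hρ
    have hvD : ValueVec G k (Function.update πst k ρ) s1 ∈ D := ⟨ρ, hρ, rfl⟩
    have h1 := hfD _ hvD
    have h2 : f Vs ≤ f (ValueVec G k (Function.update πst k ρ) s1) := le_trans hfVs_le h1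
    have h3 : ∑ i, l0 i * ValueVec G k (Function.update πst k ρ) s1 i
        ≤ ∑ i, l0 i * Vs i := by
      rw [hfl0, hfl0]
      linarith
    calc ∑ i, l0 i / Csum * ValueVec G k (Function.update πst k ρ) s1 i
        = (∑ i, l0 i * ValueVec G k (Function.update πst k ρ) s1 i) / Csum := by
          rw [Finset.sum_div]
          exact Finset.sum_congr rfl fun i _ => by ring
      _ ≤ (∑ i, l0 i * Vs i) / Csum := by
          exact div_le_div_of_nonneg_right h3 hCpos.le
      _ = ∑ i, l0 i / Csum * Vs i := by
          rw [Finset.sum_div]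
          exact Finset.sum_congr rfl fun i _ => by ring

end AuxDev

/-- **Every Weak PNE is a Nash equilibrium of some nonnegative scalarization.**
For any Weak Pareto-Nash Equilibrium `π*` of a finite MOMG there is a preference
profile `Λ = (λ^1,…,λ^N)` with every `λ^k ∈ Δ_M` (nonnegative entries summing
to 1) such that `π*` is a Nash equilibrium of the scalarized game `G_Λ`. -/
theorem WPNE_is_scalarizedNE {N M H : ℕ} (hN : 1 ≤ N) (hH : 1 ≤ H) (hM : 1 ≤ M)
    (S : Type) (A : Fin N → Type) [Fintype S] [Nonempty S]
    [∀ j, Fintype (A j)] [∀ j, Nonempty (A j)]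
    (G : MOMG N M H S A) (s1 : S)
    (πstar : (j : Fin N) → Fin H → S → A j → ℝ)
    (hprod : IsProductPolicy πstar)
    (hWPNE : IsWPNE G s1 πstar) :
    ∃ lam : Fin N → Fin M → ℝ,
      (∀ k, InSimplex (lam k)) ∧ IsScalarizedNE G s1 lam πstar := by
  have key : ∀ k : Fin N, ∃ l : Fin M → ℝ, InSimplex l ∧
      ∀ ρ : Fin H → S → A k → ℝ, IsPolicy ρ →
        ∑ i, l i * ValueVec G k (Function.update πstar k ρ) s1 i
          ≤ ∑ i, l i * ValueVec G k πstar s1 i :=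
    fun k => exists_scalarization hM G s1 k πstar hprod (hWPNE k)
  choose lam h1 h2 using key
  exact ⟨lam, h1, fun k ρ hρ => h2 k ρ hρ⟩
end

section
/- Consider the single-state, single-step multi-objective decision problem with three actions a_1, a_2, a_3 and reward vectors r(a_1) = (3,3), r(a_2) = (1,10), r(a_3) = (10,1) in ℝ², and the concave utility u(x,y) = min(x,y). Then: (i) for every probability distribution π over {a_1,a_2,a_3}, the expected scalarized return ∑_a π(a)·u(r(a)) is at most u(r(a_1)) = 3, so the deterministic policy choosing a_1 is ESR-optimal; and (ii) the expected reward vector of the mixed policy π = (0, 1/2, 1/2), namely (5.5, 5.5), strictly Pareto dominates (3,3) componentwise. Hence the ESR-optimal policy is not weakly Pareto optimal. -/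
open Finset

/-- The reward vectors `r(a_1) = (3,3)`, `r(a_2) = (1,10)`, `r(a_3) = (10,1)`. -/
noncomputable def exReward : Fin 3 → Fin 2 → ℝ :=
  ![![3, 3], ![1, 10], ![10, 1]]

/-- The concave utility `u(x, y) = min(x, y)`. -/
noncomputable def exUtility (v : Fin 2 → ℝ) : ℝ := min (v 0) (v 1)

/-! ESR is linear in the policy, so it only sees the utilities `3, 1, 1` of the actions and no
mixture beats `a_1`. Mixing `a_2` and `a_3` first averages their rewards to `(5.5, 5.5)`, which
dominates `(3, 3)`; the gain is invisible to ESR because `min` is applied before averaging. -/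

theorem Finset.sum_mul_le_of_forall_le {ι R : Type*} [Fintype ι] [Semiring R] [PartialOrder R]
    [IsOrderedRing R] {π f : ι → R} {c : R} (hπ : ∀ a, 0 ≤ π a) (hπ_sum : ∑ a, π a = 1)
    (hf : ∀ a, f a ≤ c) : ∑ a, π a * f a ≤ c :=
  calc ∑ a, π a * f a ≤ ∑ a, π a * c :=
        sum_le_sum fun a _ => mul_le_mul_of_nonneg_left (hf a) (hπ a)
    _ = c := by rw [← sum_mul, hπ_sum, one_mul]

theorem exUtility_exReward_zero : exUtility (exReward 0) = 3 := by
  norm_num [exUtility, exReward]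

theorem exUtility_exReward_le (a : Fin 3) : exUtility (exReward a) ≤ exUtility (exReward 0) := by
  fin_cases a <;> norm_num [exUtility, exReward]

theorem exReward_zero_lt_exMixed (i : Fin 2) :
    exReward 0 i < ∑ a, (![0, 1/2, 1/2] : Fin 3 → ℝ) a * exReward a i := by
  fin_cases i <;> norm_num [Fin.sum_univ_three, exReward, Matrix.cons_val_two]

theorem exMixed_nonneg (a : Fin 3) : 0 ≤ (![0, 1/2, 1/2] : Fin 3 → ℝ) a := by
  fin_cases a <;> norm_num

theorem sum_exMixed : ∑ a, (![0, 1/2, 1/2] : Fin 3 → ℝ) a = 1 := by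
  norm_num [Fin.sum_univ_three, Matrix.cons_val_two]

/-- **An ESR-optimal policy need not be weakly Pareto optimal.**
In the single-state, single-step decision problem with actions `a_1, a_2, a_3`,
rewards `(3,3), (1,10), (10,1)` and utility `u = min`:
(i)  `u(r(a_1)) = 3` and every distribution `π` has expected scalarized return
     `∑_a π(a)·u(r(a)) ≤ 3`, so the deterministic policy choosing `a_1` is
     ESR-optimal;
(ii) the mixed policy `π = (0, 1/2, 1/2)` has expected reward vector with every
     component `> 3`, i.e. it strictly Pareto dominates `(3,3) = r(a_1)`;
hence there is a policy whose expected reward vector strictly Pareto dominates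
that of the ESR-optimal policy, so the latter is not weakly Pareto optimal. -/
theorem esr_optimal_not_weakly_pareto_optimal :
    (exUtility (exReward 0) = 3) ∧
    (∀ π : Fin 3 → ℝ, (∀ a, 0 ≤ π a) → ∑ a, π a = 1 →
      ∑ a, π a * exUtility (exReward a) ≤ exUtility (exReward 0)) ∧
    (∀ i, exReward 0 i < ∑ a, (![0, 1/2, 1/2] : Fin 3 → ℝ) a * exReward a i) ∧
    (∃ π : Fin 3 → ℝ, (∀ a, 0 ≤ π a) ∧ ∑ a, π a = 1 ∧
      ∀ i, exReward 0 i < ∑ a, π a * exReward a i) :=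
  ⟨exUtility_exReward_zero,
    fun _ hπ hπ_sum => sum_mul_le_of_forall_le hπ hπ_sum exUtility_exReward_le,
    exReward_zero_lt_exMixed,
    ⟨_, exMixed_nonneg, sum_exMixed, exReward_zero_lt_exMixed⟩⟩
end

section
/- Let V ⊆ ℝ^M be a convex polytope (the convex hull of a finite set of points) and let v* ∈ V be Pareto optimal in V, i.e., no v ∈ V Pareto dominates v*. Then there exists λ ∈ ℝ^M with λ_i > 0 for all i and ∑_{i=1}^M λ_i = 1 such that λ^⊤ v* ≥ λ^⊤ v for all v ∈ V. -/
/-!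
Let `C` be the cone generated by the vectors `w - v*` (`w ∈ F`) and `-eⱼ`. If some `eᵢ` lay in `C`,
then `v* + t • eᵢ` would lie below a point of `V` for some `t > 0`, and that point would Pareto
dominate `v*`. A finitely generated cone is closed (conic Carathéodory reduces it to cones over
linearly independent vectors), so Farkas' lemma gives functionals `fᵢ ≥ 0` on `C` with
`fᵢ eᵢ < 0`. Then `φ = -∑ fᵢ` is positive on every `eⱼ` and maximal on `V` at `v*`; its
normalized coefficients are the required `λ`.
-/

open Finset

namespace PointedCone

variable {E : Type*} [AddCommGroup E] [Module ℝ E]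

lemma mem_hull_finset_iff {s : Finset E} {x : E} :
    x ∈ hull ℝ (s : Set E) ↔ ∃ c : E → ℝ, (∀ y ∈ s, 0 ≤ c y) ∧ ∑ y ∈ s, c y • y = x := by
  constructor
  · intro hx
    obtain ⟨f, -, rfl⟩ := Submodule.mem_span_finset.mp hx
    exact ⟨fun y => f y, fun y _ => (f y).2, rfl⟩
  · rintro ⟨c, hc, rfl⟩
    exact sum_mem fun y hy => (hull ℝ (s : Set E)).smul_mem (hc y hy) (subset_hull hy)

lemma exists_mem_hull_erase_of_not_linearIndepOn [DecidableEq E] {s : Finset E}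
    (hs : ¬LinearIndepOn ℝ id (s : Set E)) {x : E} (hx : x ∈ hull ℝ (s : Set E)) :
    ∃ y ∈ s, x ∈ hull ℝ (s.erase y : Set E) := by
  obtain ⟨c, hc, rfl⟩ := mem_hull_finset_iff.mp hx
  obtain ⟨a, ha, y₀, hy₀, ha₀⟩ := not_linearIndepOn_finset_iff.mp hs
  simp only [id] at ha
  wlog hpos : 0 < a y₀ generalizing a
  · refine this (-a) (neg_ne_zero.mpr ha₀) (by simp [ha]) ?_
    simpa using lt_of_le_of_ne (not_lt.mp hpos) ha₀
  -- Move `c` along the relation `a` by the largest step `θ` keeping it nonnegative: the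
  -- coefficient at a minimizer `y` of `c / a` drops to zero.
  obtain ⟨y, hy, hmin⟩ := (s.filter (0 < a ·)).exists_min_image (fun y => c y / a y)
    ⟨y₀, mem_filter.mpr ⟨hy₀, hpos⟩⟩
  obtain ⟨hys, hay⟩ := mem_filter.mp hy
  set θ := c y / a y
  have hθ : 0 ≤ θ := div_nonneg (hc y hys) hay.le
  have hc' : ∀ z ∈ s, 0 ≤ c z - θ * a z := by
    intro z hz
    rcases lt_or_ge 0 (a z) with haz | haz
    · have := hmin z (mem_filter.mpr ⟨hz, haz⟩)
      rw [le_div_iff₀ haz] at this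
      linarith
    · nlinarith [hc z hz]
  have hy0 : c y - θ * a y = 0 := by simp [θ, div_mul_cancel₀ _ hay.ne']
  refine ⟨y, hys, mem_hull_finset_iff.mpr ⟨fun z => c z - θ * a z,
    fun z hz => hc' z (mem_of_mem_erase hz), ?_⟩⟩
  rw [sum_erase _ (by simp [hy0])]
  simp only [sub_smul, sum_sub_distrib, mul_smul, ← smul_sum, ha, smul_zero, sub_zero]

lemma exists_linearIndepOn_subset_of_mem_hull (s : Finset E) {x : E}
    (hx : x ∈ hull ℝ (s : Set E)) :
    ∃ t ⊆ s, LinearIndepOn ℝ id (t : Set E) ∧ x ∈ hull ℝ (t : Set E) := by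
  classical
  induction s using Finset.strongInduction with
  | H s ih =>
    by_cases hs : LinearIndepOn ℝ id (s : Set E)
    · exact ⟨s, subset_rfl, hs, hx⟩
    obtain ⟨y, hy, hxy⟩ := exists_mem_hull_erase_of_not_linearIndepOn hs hx
    obtain ⟨t, hts, ht, hxt⟩ := ih _ (erase_ssubset hy) hxy
    exact ⟨t, hts.trans (erase_subset y s), ht, hxt⟩

variable [TopologicalSpace E] [IsTopologicalAddGroup E] [ContinuousSMul ℝ E] [T2Space E]

lemma isClosed_hull_of_linearIndepOn {t : Finset E} (ht : LinearIndepOn ℝ id (t : Set E)) :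
    IsClosed (hull ℝ (t : Set E) : Set E) := by
  let L := Fintype.linearCombination ℝ ((↑) : t → E)
  have hL : IsClosedMap L :=
    (LinearMap.isClosedEmbedding_of_injective <| LinearMap.ker_eq_bot.mpr <|
      linearIndependent_iff_injective_fintypeLinearCombination.mp ht).isClosedMap
  have himage : (hull ℝ (t : Set E) : Set E) = L '' Set.Ici 0 := by
    ext x
    rw [SetLike.mem_coe, mem_hull_finset_iff]
    constructor
    · rintro ⟨c, hc, rfl⟩
      refine ⟨fun y => c y, fun y => hc y y.2, ?_⟩
      simp [L, Fintype.linearCombination_apply, ← sum_coe_sort t]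
    · rintro ⟨c, hc, rfl⟩
      classical
      refine ⟨fun y => if hy : y ∈ t then c ⟨y, hy⟩ else 0,
        fun y hy => by simpa [hy] using hc ⟨y, hy⟩, ?_⟩
      simp [L, Fintype.linearCombination_apply, ← sum_coe_sort t]
  rw [himage]
  exact hL _ isClosed_Ici

theorem isClosed_of_fg {C : PointedCone ℝ E} (hC : C.FG) : IsClosed (C : Set E) := by
  obtain ⟨s, rfl⟩ := hC
  have hunion : (hull ℝ (s : Set E) : Set E) =
      ⋃ t ∈ {t : Finset E | t ⊆ s ∧ LinearIndepOn ℝ id (t : Set E)}, hull ℝ (t : Set E) := by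
    ext x
    simp only [Set.mem_iUnion, Set.mem_ofPred_eq, SetLike.mem_coe]
    constructor
    · intro hx
      obtain ⟨t, hts, ht, hxt⟩ := exists_linearIndepOn_subset_of_mem_hull s hx
      exact ⟨t, ⟨hts, ht⟩, hxt⟩
    · rintro ⟨t, ⟨hts, -⟩, hxt⟩
      exact Submodule.span_mono (by exact_mod_cast hts) hxt
  rw [hunion]
  exact (s.powerset.finite_toSet.subset fun t ht => mem_powerset.mpr ht.1).isClosed_biUnion
    fun t ht => isClosed_hull_of_linearIndepOn ht.2

end PointedCone

theorem Convex.exists_pos_add_smul_mem_of_mem_hull {𝕜 E : Type*} [Field 𝕜] [LinearOrder 𝕜]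
    [IsStrictOrderedRing 𝕜] [AddCommGroup E] [Module 𝕜 E] {K : Set E} (hK : Convex 𝕜 K)
    {v x : E} (hv : v ∈ K) (hx : x ∈ PointedCone.hull 𝕜 ((· - v) '' K)) :
    ∃ t : 𝕜, 0 < t ∧ v + t • x ∈ K := by
  have hD : Convex 𝕜 ((· - v) '' K) := by simpa [sub_eq_neg_add] using hK.translate (-v)
  have hzero : (0 : E) ∈ ConvexCone.hull 𝕜 ((· - v) '' K) :=
    ConvexCone.subset_hull ⟨v, hv, sub_self v⟩
  have hle : PointedCone.hull 𝕜 ((· - v) '' K) ≤ (ConvexCone.hull 𝕜 _).toPointedCone hzero :=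
    Submodule.span_le.mpr ConvexCone.subset_hull
  obtain ⟨r, hr, _, ⟨u, hu, rfl⟩, rfl⟩ := (ConvexCone.mem_hull_of_convex hD).mp (hle hx)
  refine ⟨r⁻¹, inv_pos.mpr hr, ?_⟩
  simpa [inv_smul_smul₀ hr.ne'] using hu

theorem Convex.lowerClosure {𝕜 E : Type*} [Semiring 𝕜] [PartialOrder 𝕜] [AddCommMonoid E]
    [PartialOrder E] [IsOrderedAddMonoid E] [Module 𝕜 E] [PosSMulMono 𝕜 E]
    {s : Set E} (hs : Convex 𝕜 s) : Convex 𝕜 (lowerClosure s : Set E) := by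
  rintro x ⟨a, ha, hxa⟩ y ⟨b, hb, hyb⟩ p q hp hq hpq
  exact ⟨p • a + q • b, hs ha hb hp hq hpq,
    add_le_add (smul_le_smul_of_nonneg_left hxa hp) (smul_le_smul_of_nonneg_left hyb hq)⟩

lemma single_notMem_hull_of_pareto {M : ℕ} {V : Set (Fin M → ℝ)} (hV : Convex ℝ V)
    {vstar : Fin M → ℝ} (hmem : vstar ∈ V) (hpareto : ∀ v ∈ V, ¬ParetoDom v vstar)
    (i : Fin M) : Pi.single i 1 ∉ PointedCone.hull ℝ ((· - vstar) '' lowerClosure V) := by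
  intro h
  obtain ⟨t, ht, w, hw, hle⟩ :=
    hV.lowerClosure.exists_pos_add_smul_mem_of_mem_hull (subset_lowerClosure hmem) h
  refine hpareto w hw ⟨fun j => le_trans ?_ (hle j), i, lt_of_lt_of_le ?_ (hle i)⟩
  · simpa using mul_nonneg ht.le ((Pi.single_nonneg.mpr zero_le_one : (0 : Fin M → ℝ) ≤ _) j)
  · simpa using ht

theorem PointedCone.exists_strongDual_pos_single_of_fg {ι : Type*} [Fintype ι] [DecidableEq ι]
    {C : PointedCone ℝ (ι → ℝ)} (hC : C.FG) (hneg : ∀ j, -Pi.single j 1 ∈ C)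
    (hpos : ∀ i, Pi.single i 1 ∉ C) :
    ∃ φ : StrongDual ℝ (ι → ℝ), (∀ j, 0 < φ (Pi.single j 1)) ∧ ∀ x ∈ C, φ x ≤ 0 := by
  have hsep (i : ι) : ∃ f : StrongDual ℝ (ι → ℝ), (∀ x ∈ C, 0 ≤ f x) ∧ f (Pi.single i 1) < 0 :=
    ProperCone.hyperplane_separation_point ⟨C, isClosed_of_fg hC⟩ (hpos i)
  choose f hfC hfi using hsep
  refine ⟨-∑ i, f i, fun j => ?_, fun x hx => ?_⟩
  · have hnonneg (i : ι) : 0 ≤ -f i (Pi.single j 1) := by simpa using hfC i _ (hneg j)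
    rw [neg_apply, _root_.sum_apply, ← sum_neg_distrib]
    exact sum_pos' (fun i _ => hnonneg i) ⟨j, mem_univ j, neg_pos.mpr (hfi j)⟩
  · simpa using sum_nonneg fun i _ => hfC i x hx

lemma LinearMap.exists_normalized_pos_weights {ι : Type*} [Fintype ι] [DecidableEq ι] [Nonempty ι]
    (φ : (ι → ℝ) →ₗ[ℝ] ℝ) (hφ : ∀ j, 0 < φ (Pi.single j 1)) :
    ∃ lam : ι → ℝ, (∀ i, 0 < lam i) ∧ ∑ i, lam i = 1 ∧
      ∃ c : ℝ, 0 < c ∧ ∀ v, ∑ i, lam i * v i = c * φ v := by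
  set S := ∑ j, φ (Pi.single j 1)
  have hS : 0 < S := sum_pos (fun j _ => hφ j) univ_nonempty
  refine ⟨fun j => φ (Pi.single j 1) / S, fun j => div_pos (hφ j) hS,
    by rw [← sum_div, div_self hS.ne'], S⁻¹, inv_pos.mpr hS, fun v => ?_⟩
  have hsingle (i : ι) : (fun j => if i = j then (1 : ℝ) else 0) = Pi.single i 1 := by
    ext j; simp [Pi.single_apply, eq_comm]
  rw [φ.pi_apply_eq_sum_univ v, mul_sum]
  exact sum_congr rfl fun i _ => by rw [hsingle, smul_eq_mul]; ring

/-- **Supporting hyperplane with strictly positive normal at a Pareto optimal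
point of a convex polytope.** Let `V ⊆ ℝ^M` be the convex hull of a finite set
of points and let `v* ∈ V` be Pareto optimal in `V` (no `v ∈ V` Pareto
dominates `v*`). Then there exists `λ` with strictly positive entries summing
to `1` such that `λᵀ v* ≥ λᵀ v` for every `v ∈ V`. -/
theorem pareto_optimal_supporting_hyperplane {M : ℕ} (hM : 1 ≤ M)
    (F : Finset (Fin M → ℝ)) (V : Set (Fin M → ℝ))
    (hV : V = convexHull ℝ (F : Set (Fin M → ℝ)))
    (vstar : Fin M → ℝ) (hmem : vstar ∈ V)
    (hpareto : ∀ v ∈ V, ¬ ParetoDom v vstar) :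
    ∃ lam : Fin M → ℝ, (∀ i, 0 < lam i) ∧ (∑ i, lam i = 1) ∧
      ∀ v ∈ V, ∑ i, lam i * v i ≤ ∑ i, lam i * vstar i := by
  have : Nonempty (Fin M) := ⟨⟨0, hM⟩⟩
  set U : Set (Fin M → ℝ) := ↑F ∪ Set.range fun j => vstar - Pi.single j 1
  have hU : U ⊆ lowerClosure V := by
    rintro u (hu | ⟨j, rfl⟩)
    · exact subset_lowerClosure (hV ▸ subset_convexHull ℝ _ hu)
    · exact ⟨vstar, hmem, sub_le_self _ (by simp [Pi.single_nonneg])⟩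
  set C := PointedCone.hull ℝ ((· - vstar) '' U)
  have hCfg : C.FG := Submodule.fg_span ((F.finite_toSet.union (Set.finite_range _)).image _)
  obtain ⟨φ, hφ, hφC⟩ := PointedCone.exists_strongDual_pos_single_of_fg hCfg
    (fun j => PointedCone.subset_hull ⟨_, Or.inr ⟨j, rfl⟩, by simp⟩)
    (fun i hi => single_notMem_hull_of_pareto (hV ▸ convex_convexHull ℝ _) hmem hpareto i
      (Submodule.span_mono (Set.image_mono hU) hi))
  obtain ⟨lam, hlam, hsum, c, hc, hlamφ⟩ := LinearMap.exists_normalized_pos_weights φ.toLinearMap hφ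
  have hφV : V ⊆ {v | φ v ≤ φ vstar} := hV ▸ convexHull_min
    (fun w hw => by simpa using hφC _ (PointedCone.subset_hull ⟨w, Or.inl hw, rfl⟩))
    (convex_halfSpace_le φ.toLinearMap.isLinear _)
  refine ⟨lam, hlam, hsum, fun v hv => ?_⟩
  rw [hlamφ, hlamφ]
  exact mul_le_mul_of_nonneg_left (hφV hv) hc.le
end

section
/- Let K be a finite set of size k and let x_1, …, x_n be any sequence of elements of K. For t ≥ 0 and x ∈ K let N_t(x) := |{ τ ≤ t : x_τ = x }| be the number of occurrences of x among the first t elements. Then ∑_{t=1}^n 1/√(max(N_{t−1}(x_t), 1)) ≤ 2√(k·n). -/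
/-!
Group the times `t` by the value `x t = c`. Within the fiber of `c` the count
`N_{t-1}(c)` runs through `0, 1, …, m_c - 1`, so the fiber contributes
`∑_{i < m_c} 1/√(max i 1) ≤ 2√m_c` by comparison with `∫ 1/√s ds = 2√s`. Since
`∑_c m_c = n`, Cauchy–Schwarz gives `∑_c √m_c ≤ √(k n)`.
-/

open Finset

/-- The discrete form of `∫ 1/√s ds = 2√s`. -/
lemma one_div_sqrt_add_one_le_two_mul_sub {x : ℝ} (hx : 0 ≤ x) :
    1 / √(x + 1) ≤ 2 * (√(x + 1) - √x) := by
  have hpos : 0 < √(x + 1) := Real.sqrt_pos.2 (by linarith)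
  have hle : √x ≤ √(x + 1) := Real.sqrt_le_sqrt (by linarith)
  have hdiff : (√(x + 1) - √x) * (√(x + 1) + √x) = 1 := by
    nlinarith [Real.sq_sqrt hx, Real.sq_sqrt (by linarith : 0 ≤ x + 1)]
  rw [div_le_iff₀ hpos]
  nlinarith [mul_le_mul_of_nonneg_left hle (sub_nonneg.2 hle)]

-- The terms `i = 0` and `i = 1` are both `1`, so the telescoping only starts at `m = 1`.
lemma sum_range_succ_one_div_sqrt_max_le {m : ℕ} (hm : 1 ≤ m) :
    ∑ i ∈ range (m + 1), 1 / √(max (i : ℝ) 1) ≤ 2 * √m := by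
  induction m, hm using Nat.le_induction with
  | base => norm_num [sum_range_succ]
  | succ m hm ih =>
    have hmax : max ((m + 1 : ℕ) : ℝ) 1 = (m : ℝ) + 1 := by
      push_cast; exact max_eq_left (by linarith)
    rw [sum_range_succ, hmax]
    push_cast
    linarith [one_div_sqrt_add_one_le_two_mul_sub (Nat.cast_nonneg (α := ℝ) m)]

lemma sum_range_one_div_sqrt_max_le (m : ℕ) :
    ∑ i ∈ range m, 1 / √(max (i : ℝ) 1) ≤ 2 * √m := by
  rcases Nat.eq_zero_or_pos m with rfl | hm
  · simp
  · calc ∑ i ∈ range m, 1 / √(max (i : ℝ) 1)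
        ≤ ∑ i ∈ range (m + 1), 1 / √(max (i : ℝ) 1) :=
          sum_le_sum_of_subset_of_nonneg (range_subset_range.2 m.le_succ)
            (fun _ _ _ ↦ by positivity)
      _ ≤ 2 * √m := sum_range_succ_one_div_sqrt_max_le hm

/-- The rank `t ↦ #{τ ∈ s | τ < t}` is a bijection from `s` onto `range #s`. -/
lemma sum_apply_card_filter_lt {α M : Type*} [LinearOrder α] [AddCommMonoid M]
    (s : Finset α) (f : ℕ → M) :
    ∑ t ∈ s, f #{τ ∈ s | τ < t} = ∑ i ∈ range #s, f i := by
  classical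
  induction s using Finset.induction_on_max with
  | empty => simp
  | insert a s ha ih =>
    have ha_notMem : a ∉ s := fun h ↦ lt_irrefl a (ha a h)
    have hrank_a : {τ ∈ insert a s | τ < a} = s := by
      ext τ
      simp only [mem_filter, mem_insert]
      exact ⟨fun ⟨h, hlt⟩ ↦ h.resolve_left hlt.ne, fun h ↦ ⟨Or.inr h, ha τ h⟩⟩
    have hrank_s : ∀ t ∈ s, {τ ∈ insert a s | τ < t} = {τ ∈ s | τ < t} := fun t ht ↦ by
      rw [filter_insert, if_neg (ha t ht).not_gt]
    rw [sum_insert ha_notMem, hrank_a, sum_congr rfl fun t ht ↦ congrArg f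
      (congrArg card (hrank_s t ht)), ih, card_insert_of_notMem ha_notMem, sum_range_succ,
      add_comm]

lemma sum_sqrt_le_sqrt_card_mul_sum {ι : Type*} (s : Finset ι) {a : ι → ℝ}
    (ha : ∀ i, 0 ≤ a i) : ∑ i ∈ s, √(a i) ≤ √(#s * ∑ i ∈ s, a i) := by
  simpa [Real.sqrt_mul (Nat.cast_nonneg _)] using
    Real.sum_sqrt_mul_sqrt_le s (fun _ ↦ zero_le_one) ha

/-- **Pigeonhole / Cauchy–Schwarz bound on the sum of inverse square-root
counts.** Let `K` be a finite set of size `k` and `x_1, …, x_n` a sequence in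
`K`. With `N_t(c)` the number of occurrences of `c` among the first `t`
elements, `∑_{t=1}^n 1/√(max(N_{t−1}(x_t), 1)) ≤ 2√(k·n)`. -/
theorem sum_inv_sqrt_counts_le {K : Type*} [Fintype K] [DecidableEq K]
    (n : ℕ) (x : Fin n → K) :
    ∑ t : Fin n,
        1 / Real.sqrt (max ((Finset.univ.filter
            (fun τ : Fin n => τ < t ∧ x τ = x t)).card : ℝ) 1)
      ≤ 2 * Real.sqrt ((Fintype.card K : ℝ) * n) := by
  set fiber : K → Finset (Fin n) := fun c ↦ {t | x t = c}
  have hcount : ∀ c, ∀ t ∈ fiber c,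
      ({τ | τ < t ∧ x τ = x t} : Finset (Fin n)) = {τ ∈ fiber c | τ < t} := fun c t ht ↦ by
    ext τ
    simp_all [fiber, and_comm]
  have hfiber : ∀ c, ∑ t ∈ fiber c, 1 / √(max (#{τ | τ < t ∧ x τ = x t} : ℝ) 1)
      ≤ 2 * √(#(fiber c)) := fun c ↦ by
    rw [sum_congr rfl fun t ht ↦ by rw [hcount c t ht],
      sum_apply_card_filter_lt (fiber c) (fun i ↦ 1 / √(max (i : ℝ) 1))]
    exact sum_range_one_div_sqrt_max_le _
  have hsize : ∑ c, (#(fiber c) : ℝ) = n := by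
    exact_mod_cast ((card_eq_sum_card_fiberwise (fun t _ ↦ mem_univ (x t))).symm.trans
      (card_fin n))
  calc ∑ t, 1 / √(max (#{τ | τ < t ∧ x τ = x t} : ℝ) 1)
      = ∑ c, ∑ t ∈ fiber c, 1 / √(max (#{τ | τ < t ∧ x τ = x t} : ℝ) 1) :=
        (sum_fiberwise univ x _).symm
    _ ≤ ∑ c, 2 * √(#(fiber c)) := sum_le_sum fun c _ ↦ hfiber c
    _ ≤ 2 * √(Fintype.card K * n) := by
        rw [← mul_sum, ← hsize, ← card_univ]
        gcongr
        exact sum_sqrt_le_sqrt_card_mul_sum _ fun _ ↦ Nat.cast_nonneg _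
end
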